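/- arXiv:2603.23820 — 6 statements merged into one kernel-verified Lean document; each statement's English description precedes it below -/
import Mathlib

section
/- If G is a graph on n vertices with distinguishing number D(G) = D, then F(G) ≤ ((D-1)/D)·n. Equivalently, for any distinguishing D-coloring of G, the union of all but one (a largest) color class is a fixing set. -/
open SimpleGraph

/-- A set `S` of vertices is a fixing set of `G` if the only automorphism of `G`
fixing every vertex of `S` is the identity. -/
def IsFixingSet {V : Type*} (G : SimpleGraph V) (S : Set V) : Prop :=
  ∀ φ : G ≃g G, (∀ v ∈ S, φ v = v) → ∀ v, φ v = v

/-- The fixing number of a finite graph: the minimum cardinality of a fixing set. -/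
noncomputable def fixingNumber {V : Type*} [Fintype V] (G : SimpleGraph V) : ℕ :=
  sInf {n | ∃ S : Finset V, S.card = n ∧ IsFixingSet G ↑S}

/-- A coloring is distinguishing if the only color-preserving automorphism is the identity. -/
def IsDistinguishingColoring {V α : Type*} (G : SimpleGraph V) (c : V → α) : Prop :=
  ∀ φ : G ≃g G, (∀ v, c (φ v) = c v) → ∀ v, φ v = v

/-- `G` is `D`-distinguishable if it has a distinguishing coloring with at most `D` colors. -/
def Distinguishable {V : Type*} (G : SimpleGraph V) (D : ℕ) : Prop :=
  ∃ c : V → Fin D, IsDistinguishingColoring G c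

/-- The distinguishing number of `G`. -/
noncomputable def distinguishingNumber {V : Type*} (G : SimpleGraph V) : ℕ :=
  sInf {D | Distinguishable G D}

/-- Eccentricity of a vertex: the supremum of distances to other vertices. -/
noncomputable def ecc {V : Type*} (G : SimpleGraph V) (v : V) : ℕ :=
  sSup (Set.range (G.dist v))

theorem fixingNumber_le_of_distinguishingNumber
    {V : Type*} [Fintype V] (G : SimpleGraph V) (D : ℕ)
    (hD : distinguishingNumber G = D) :
    (fixingNumber G : ℚ) ≤ ((D : ℚ) - 1) / D * Fintype.card V := by
  classical
  have hDist : Distinguishable G (Fintype.card V) := by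
    refine ⟨fun v => (Fintype.equivFin V) v, fun φ hφ v => ?_⟩
    exact (Fintype.equivFin V).injective (hφ v)
  have hne : {D | Distinguishable G D}.Nonempty := ⟨_, hDist⟩
  have hmem : Distinguishable G D := by rw [← hD]; exact Nat.sInf_mem hne
  obtain ⟨c, hc⟩ := hmem
  rcases Nat.eq_zero_or_pos D with h0 | hpos
  · subst h0
    have hV : IsEmpty V := ⟨fun v => (c v).elim0⟩
    have hfix : fixingNumber G = 0 := by
      apply Nat.sInf_eq_zero.mpr
      exact Or.inl ⟨∅, by simp, fun φ _ v => hV.elim v⟩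
    rw [hfix]
    simp
  · obtain ⟨i₀, -, hmax⟩ := Finset.exists_max_image Finset.univ
      (fun i => (Finset.univ.filter (fun v => c v = i)).card) ⟨⟨0, hpos⟩, Finset.mem_univ _⟩
    set F : Finset V := Finset.univ.filter (fun v => c v = i₀) with hF
    set S : Finset V := Finset.univ \ F with hS
    have hSfix : IsFixingSet G ↑S := by
      intro φ hφ v
      have key : ∀ w, c (φ w) = c w := by
        intro w
        by_cases hw : c w = i₀
        · by_contra hneq
          have hmemS : φ w ∈ S := by
            simp only [hS, hF, Finset.mem_sdiff, Finset.mem_univ, Finset.mem_filter, true_and]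
            exact fun h => hneq (by rw [h, hw])
          have h1 : φ (φ w) = φ w := hφ _ (by exact_mod_cast hmemS)
          have h2 : φ w = w := φ.toEquiv.injective h1
          exact hneq (by rw [h2])
        · have hmemS : w ∈ S := by
            simp only [hS, hF, Finset.mem_sdiff, Finset.mem_univ, Finset.mem_filter, true_and]
            exact fun h => hw h
          rw [hφ _ (by exact_mod_cast hmemS)]
      exact hc φ key v
    have hle : fixingNumber G ≤ S.card := Nat.sInf_le ⟨S, rfl, hSfix⟩
    have hcardS : S.card = Fintype.card V - F.card := by
      rw [hS, Finset.card_sdiff_of_subset (Finset.subset_univ F), Finset.card_univ]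
    have hFle : F.card ≤ Fintype.card V := Finset.card_le_card (Finset.subset_univ F)
    have hsum : Fintype.card V = ∑ i : Fin D, (Finset.univ.filter (fun v => c v = i)).card := by
      rw [← Finset.card_univ]
      exact Finset.card_eq_sum_card_fiberwise (fun x _ => Finset.mem_univ (c x))
    have hn : Fintype.card V ≤ D * F.card := by
      calc Fintype.card V = ∑ i : Fin D, (Finset.univ.filter (fun v => c v = i)).card := hsum
        _ ≤ ∑ _i : Fin D, F.card := Finset.sum_le_sum (fun i _ => hmax i (Finset.mem_univ i))
        _ = D * F.card := by simp [Finset.sum_const, Finset.card_univ]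
    -- pass to ℚ
    have hD0 : (0 : ℚ) < D := by exact_mod_cast hpos
    have hn' : (Fintype.card V : ℚ) ≤ D * F.card := by exact_mod_cast hn
    have hle' : (fixingNumber G : ℚ) ≤ (Fintype.card V : ℚ) - F.card := by
      have : (fixingNumber G : ℚ) ≤ (S.card : ℚ) := by exact_mod_cast hle
      rw [hcardS] at this
      rwa [Nat.cast_sub hFle] at this
    refine hle'.trans ?_
    rw [div_mul_eq_mul_div, le_div_iff₀ hD0]
    nlinarith [hn']
end

section
/- If T is a 2-distinguishable spider of order at least 3 (a tree with at most one vertex of degree ≥ 3), then F(T) ≤ (4/11)·|V(T)|. -/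
open SimpleGraph

set_option linter.unusedSectionVars false
set_option linter.unusedVariables false
namespace SpiderProofAux

open SimpleGraph Walk Finset

variable {V : Type*} [DecidableEq V] {G : SimpleGraph V}

lemma isPath_concat {u v w : V} {p : G.Walk u v} (hp : p.IsPath) (h : G.Adj v w)
    (hw : w ∉ p.support) : (p.concat h).IsPath := by
  rw [← isPath_reverse_iff, reverse_concat]
  exact hp.reverse.cons (by simpa [support_reverse] using hw)

lemma tree_path_length (hT : G.IsTree) {u v : V} {p : G.Walk u v} (hp : p.IsPath) :
    p.length = G.dist u v := by
  obtain ⟨q, hq, hql⟩ := hT.isConnected.exists_path_of_dist u v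
  rw [(hT.existsUnique_path u v).unique hp hq, hql]

lemma mem_support_dist (hT : G.IsTree) {u v w : V} {p : G.Walk u v} (hp : p.IsPath)
    (hw : w ∈ p.support) : G.dist u w + G.dist w v = G.dist u v := by
  have h1 := tree_path_length hT (hp.takeUntil hw)
  have h2 := tree_path_length hT (hp.dropUntil hw)
  have h3 := congrArg Walk.length (p.take_spec hw)
  rw [Walk.length_append] at h3
  rw [← tree_path_length hT hp, ← h3, h1, h2]

lemma mem_support_of_dist_add (hT : G.IsTree) {u v w : V} {p : G.Walk u v} (hp : p.IsPath)
    (h : G.dist u w + G.dist w v = G.dist u v) : w ∈ p.support := by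
  obtain ⟨q1, hq1, hl1⟩ := hT.isConnected.exists_path_of_dist u w
  obtain ⟨q2, hq2, hl2⟩ := hT.isConnected.exists_path_of_dist w v
  have hlen : (q1.append q2).length = G.dist u v := by
    rw [Walk.length_append, hl1, hl2, h]
  have hpath : (q1.append q2).IsPath := (q1.append q2).isPath_of_length_eq_dist hlen
  have := (hT.existsUnique_path u v).unique hp hpath
  rw [this]
  rw [Walk.mem_support_append_iff]
  exact Or.inl q1.end_mem_support

lemma adj_dist_cases (hT : G.IsTree) {x v w : V} (h : G.Adj v w) :
    G.dist x w = G.dist x v + 1 ∨ G.dist x v = G.dist x w + 1 := by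
  have hconn := hT.isConnected
  have h1 : G.dist x w ≤ G.dist x v + 1 := by
    have := hconn.dist_triangle (u := x) (v := v) (w := w)
    rwa [(dist_eq_one_iff_adj.2 h)] at this
  have h2 : G.dist x v ≤ G.dist x w + 1 := by
    have := hconn.dist_triangle (u := x) (v := w) (w := v)
    rwa [(dist_eq_one_iff_adj.2 h.symm)] at this
  have hne : G.dist x w ≠ G.dist x v := by
    intro heq
    obtain ⟨p, hp, hpl⟩ := hconn.exists_path_of_dist x v
    obtain ⟨q, hq, hql⟩ := hconn.exists_path_of_dist x w
    by_cases hv : v ∈ q.support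
    · have := mem_support_dist hT hq hv
      have hvw : G.dist v w = 1 := dist_eq_one_iff_adj.2 h
      have hge : 1 ≤ G.dist v w := by omega
      omega
    · have hr : (q.concat h.symm).IsPath := isPath_concat hq h.symm hv
      have := tree_path_length hT hr
      rw [Walk.length_concat, hql] at this
      omega
  omega

lemma parent_exists (hT : G.IsTree) {x v : V} (hv : v ≠ x) :
    ∃ u, G.Adj v u ∧ G.dist x u + 1 = G.dist x v := by
  have hconn := hT.isConnected
  obtain ⟨q, hq, hql⟩ := hconn.exists_path_of_dist v x
  obtain ⟨u, ha, r, rfl⟩ := q.exists_eq_cons_of_ne hv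
  rw [Walk.cons_isPath_iff] at hq
  refine ⟨u, ha, ?_⟩
  have h1 := tree_path_length hT hq.1
  have h2 : G.dist v x = r.length + 1 := by
    simpa [Walk.length_cons] using hql.symm
  have hc1 : G.dist x u = G.dist u x := SimpleGraph.dist_comm
  have hc2 : G.dist x v = G.dist v x := SimpleGraph.dist_comm
  omega

lemma parent_unique (hT : G.IsTree) {x v u₁ u₂ : V}
    (h1 : G.Adj v u₁) (hd1 : G.dist x u₁ + 1 = G.dist x v)
    (h2 : G.Adj v u₂) (hd2 : G.dist x u₂ + 1 = G.dist x v) : u₁ = u₂ := by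
  by_contra hne
  have hconn := hT.isConnected
  obtain ⟨p, hp, hpl⟩ := hconn.exists_path_of_dist x u₁
  have hvp : v ∉ p.support := by
    intro hv
    have := mem_support_dist hT hp hv
    have : G.dist x v ≤ G.dist x u₁ := by omega
    omega
  have hu2p : u₂ ∉ p.support := by
    intro hu
    have := mem_support_dist hT hp hu
    have h0 : G.dist u₂ u₁ = 0 := by omega
    have := (hconn.dist_eq_zero_iff (u := u₂) (v := u₁)).1 h0
    exact hne this.symm
  have hq1 : (p.concat h1.symm).IsPath := isPath_concat hp h1.symm hvp
  have hu2q : u₂ ∉ (p.concat h1.symm).support := by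
    rw [Walk.support_concat]
    simp only [List.concat_eq_append, List.mem_append, List.mem_singleton]
    rintro (h | h)
    · exact hu2p h
    · exact G.ne_of_adj h2 h.symm
  have hq2 : ((p.concat h1.symm).concat h2).IsPath := isPath_concat hq1 h2 hu2q
  have := tree_path_length hT hq2
  rw [Walk.length_concat, Walk.length_concat, hpl] at this
  omega


lemma exists_neighbor [Fintype V] (hconn : G.Connected) (hcard : 1 < Fintype.card V) (v : V) :
    ∃ w, G.Adj v w := by
  obtain ⟨u, hu⟩ := Fintype.exists_ne_of_one_lt_card hcard v
  obtain ⟨p⟩ := hconn v u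
  obtain ⟨w, ha, r, rfl⟩ := p.exists_eq_cons_of_ne (Ne.symm hu)
  exact ⟨w, ha⟩

lemma child_exists [Fintype V] [DecidableRel G.Adj] (hT : G.IsTree)
    {x v : V} (hv : v ≠ x) (hdeg : G.degree v ≠ 1) :
    ∃ w, G.Adj v w ∧ G.dist x w = G.dist x v + 1 := by
  obtain ⟨u, hu, hud⟩ := parent_exists hT hv
  have h2 : 1 < G.degree v := by
    have h0 : 0 < G.degree v := by
      rw [← card_neighborFinset_eq_degree]
      exact Finset.card_pos.2 ⟨u, (mem_neighborFinset G v u).2 hu⟩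
    omega
  rw [← card_neighborFinset_eq_degree] at h2
  obtain ⟨w, hw, hwu⟩ := Finset.exists_mem_ne h2 u
  rw [mem_neighborFinset] at hw
  refine ⟨w, hw, ?_⟩
  rcases adj_dist_cases hT (x := x) hw with h | h
  · exact h
  · exact absurd (parent_unique hT hw (by omega) hu hud) hwu

lemma iso_dist (hconn : G.Connected) (φ : G ≃g G) (u v : V) :
    G.dist (φ u) (φ v) = G.dist u v := by
  have key : ∀ (ψ : G ≃g G) (a b : V), G.dist (ψ a) (ψ b) ≤ G.dist a b := by
    intro ψ a b
    obtain ⟨p, hp, hl⟩ := hconn.exists_path_of_dist a b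
    have := SimpleGraph.dist_le (p.map ψ.toHom)
    rwa [Walk.length_map, hl] at this
  refine le_antisymm (key φ u v) ?_
  have := key φ.symm (φ u) (φ v)
  simpa using this

lemma iso_degree [Fintype V] [DecidableRel G.Adj] (φ : G ≃g G) (v : V) :
    G.degree (φ v) = G.degree v := by
  classical
  rw [← card_neighborSet_eq_degree, ← card_neighborSet_eq_degree]
  exact (Fintype.card_congr (φ.mapNeighborSet v)).symm

lemma fix_all [Fintype V] [DecidableRel G.Adj] (hT : G.IsTree) (x : V) (φ : G ≃g G)
    (hx : φ x = x) (hleaf : ∀ v, G.degree v = 1 → φ v = v) (v : V) : φ v = v := by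
  have hconn := hT.isConnected
  have hdist : ∀ w, G.dist x (φ w) = G.dist x w := by
    intro w
    conv_lhs => rw [← hx]
    exact iso_dist hconn φ x w
  have hdlt : ∀ w, G.dist x w < Fintype.card V := by
    intro w
    obtain ⟨p, hp, hl⟩ := hconn.exists_path_of_dist x w
    rw [← hl]; exact hp.length_lt
  have key : ∀ (k : ℕ) (v : V), Fintype.card V ≤ G.dist x v + k → φ v = v := by
    intro k
    induction k with
    | zero => intro v hv; exact absurd (hdlt v) (by omega)
    | succ k ih =>
      intro v hv
      by_cases hvx : v = x
      · rw [hvx, hx]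
      by_cases hd : G.degree v = 1
      · exact hleaf v hd
      obtain ⟨w, hw, hwd⟩ := child_exists hT hvx hd
      have hwfix : φ w = w := ih w (by omega)
      have hadj : G.Adj w (φ v) := by
        have h' : G.Adj (φ v) (φ w) := φ.map_adj_iff.2 hw
        rw [hwfix] at h'; exact h'.symm
      have hd1 : G.dist x (φ v) + 1 = G.dist x w := by rw [hdist v]; omega
      have hd2 : G.dist x v + 1 = G.dist x w := by omega
      exact parent_unique hT hadj hd1 hw.symm hd2
  exact key (Fintype.card V) v (by omega)

lemma iso_of_invol (σ : Equiv.Perm V) (hσ : ∀ a, σ (σ a) = a)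
    (h : ∀ a b, G.Adj a b → G.Adj (σ a) (σ b)) : ∃ φ : G ≃g G, ∀ a, φ a = σ a := by
  refine ⟨⟨σ, ?_⟩, fun a => rfl⟩
  intro a b
  constructor
  · intro hab
    have := h _ _ hab
    rwa [hσ, hσ] at this
  · exact h a b

lemma swap_iso {u v : V} (huv : u ≠ v) (hN : ∀ w, G.Adj u w ↔ G.Adj v w) :
    ∃ φ : G ≃g G, ∀ a, φ a = Equiv.swap u v a := by
  have hadj : ¬ G.Adj u v := fun h => G.irrefl ((hN v).mp h)
  have hinv : ∀ a, Equiv.swap u v (Equiv.swap u v a) = a := fun a => Equiv.swap_apply_self u v a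
  have hdir : ∀ a b, G.Adj a b → G.Adj (Equiv.swap u v a) (Equiv.swap u v b) := by
    intro a b hab
    rcases eq_or_ne a u with hau | hau
    · rw [hau] at hab ⊢
      rcases eq_or_ne b v with hbv | hbv
      · rw [hbv] at hab; exact absurd hab hadj
      · have hbu : b ≠ u := fun h => G.irrefl (h ▸ hab)
        rw [Equiv.swap_apply_left, Equiv.swap_apply_of_ne_of_ne hbu hbv]
        exact (hN b).mp hab
    rcases eq_or_ne a v with hav | hav
    · rw [hav] at hab ⊢
      rcases eq_or_ne b u with hbu | hbu
      · rw [hbu] at hab; exact absurd hab.symm hadj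
      · have hbv : b ≠ v := fun h => G.irrefl (h ▸ hab)
        rw [Equiv.swap_apply_right, Equiv.swap_apply_of_ne_of_ne hbu hbv]
        exact (hN b).mpr hab
    rw [Equiv.swap_apply_of_ne_of_ne hau hav]
    rcases eq_or_ne b u with hbu | hbu
    · rw [hbu] at hab ⊢
      rw [Equiv.swap_apply_left]
      exact (((hN a).mp hab.symm)).symm
    rcases eq_or_ne b v with hbv | hbv
    · rw [hbv] at hab ⊢
      rw [Equiv.swap_apply_right]
      exact (((hN a).mpr hab.symm)).symm
    rw [Equiv.swap_apply_of_ne_of_ne hbu hbv]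
    exact hab
  obtain ⟨φ, hφ⟩ := iso_of_invol (G := G) (Equiv.swap u v) hinv hdir
  exact ⟨φ, hφ⟩

lemma double_swap_iso {x l₁ l₂ m₁ m₂ : V}
    (hll : l₁ ≠ l₂) (hmm : m₁ ≠ m₂)
    (hlm11 : l₁ ≠ m₁) (hlm12 : l₁ ≠ m₂) (hlm21 : l₂ ≠ m₁) (hlm22 : l₂ ≠ m₂)
    (hxl1 : x ≠ l₁) (hxl2 : x ≠ l₂) (hxm1 : x ≠ m₁) (hxm2 : x ≠ m₂)
    (hNl1 : ∀ w, G.Adj l₁ w ↔ w = m₁) (hNl2 : ∀ w, G.Adj l₂ w ↔ w = m₂)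
    (hNm1 : ∀ w, G.Adj m₁ w ↔ (w = x ∨ w = l₁)) (hNm2 : ∀ w, G.Adj m₂ w ↔ (w = x ∨ w = l₂)) :
    ∃ φ : G ≃g G, ∀ a, φ a = Equiv.swap l₁ l₂ (Equiv.swap m₁ m₂ a) := by
  set σ : Equiv.Perm V := (Equiv.swap m₁ m₂).trans (Equiv.swap l₁ l₂) with hσdef
  have hσ : ∀ a, σ a = Equiv.swap l₁ l₂ (Equiv.swap m₁ m₂ a) := fun a => rfl
  have vl1 : σ l₁ = l₂ := by
    rw [hσ, Equiv.swap_apply_of_ne_of_ne hlm11 hlm12, Equiv.swap_apply_left]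
  have vl2 : σ l₂ = l₁ := by
    rw [hσ, Equiv.swap_apply_of_ne_of_ne hlm21 hlm22, Equiv.swap_apply_right]
  have vm1 : σ m₁ = m₂ := by
    rw [hσ, Equiv.swap_apply_left, Equiv.swap_apply_of_ne_of_ne hlm12.symm hlm22.symm]
  have vm2 : σ m₂ = m₁ := by
    rw [hσ, Equiv.swap_apply_right, Equiv.swap_apply_of_ne_of_ne hlm11.symm hlm21.symm]
  have vx : σ x = x := by
    rw [hσ, Equiv.swap_apply_of_ne_of_ne hxm1 hxm2, Equiv.swap_apply_of_ne_of_ne hxl1 hxl2]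
  have vo : ∀ a, a ≠ l₁ → a ≠ l₂ → a ≠ m₁ → a ≠ m₂ → σ a = a := by
    intro a h1 h2 h3 h4
    rw [hσ, Equiv.swap_apply_of_ne_of_ne h3 h4, Equiv.swap_apply_of_ne_of_ne h1 h2]
  have hinv : ∀ a, σ (σ a) = a := by
    intro a
    rcases eq_or_ne a l₁ with rfl | h1
    · rw [vl1, vl2]
    rcases eq_or_ne a l₂ with rfl | h2
    · rw [vl2, vl1]
    rcases eq_or_ne a m₁ with rfl | h3
    · rw [vm1, vm2]
    rcases eq_or_ne a m₂ with rfl | h4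
    · rw [vm2, vm1]
    rw [vo a h1 h2 h3 h4, vo a h1 h2 h3 h4]
  have hdir : ∀ a b, G.Adj a b → G.Adj (σ a) (σ b) := by
    intro a b hab
    rcases eq_or_ne a l₁ with rfl | h1
    · have hb : b = m₁ := (hNl1 b).mp hab
      subst hb
      rw [vl1, vm1]
      exact ((hNl2 m₂).mpr rfl)
    rcases eq_or_ne a l₂ with rfl | h2
    · have hb : b = m₂ := (hNl2 b).mp hab
      subst hb
      rw [vl2, vm2]
      exact ((hNl1 m₁).mpr rfl)
    rcases eq_or_ne a m₁ with rfl | h3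
    · rcases (hNm1 b).mp hab with hbx | hbl
      · rw [hbx, vm1, vx]
        exact (hNm2 x).mpr (Or.inl rfl)
      · rw [hbl, vm1, vl1]
        exact (hNm2 l₂).mpr (Or.inr rfl)
    rcases eq_or_ne a m₂ with rfl | h4
    · rcases (hNm2 b).mp hab with hbx | hbl
      · rw [hbx, vm2, vx]
        exact (hNm1 x).mpr (Or.inl rfl)
      · rw [hbl, vm2, vl2]
        exact (hNm1 l₁).mpr (Or.inr rfl)
    rw [vo a h1 h2 h3 h4]
    rcases eq_or_ne b l₁ with rfl | g1
    · exact absurd ((hNl1 a).mp hab.symm) h3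
    rcases eq_or_ne b l₂ with rfl | g2
    · exact absurd ((hNl2 a).mp hab.symm) h4
    rcases eq_or_ne b m₁ with g3 | g3
    · rcases (hNm1 a).mp ((g3 ▸ hab).symm) with hax | hal
      · rw [g3, vm1, hax]
        exact ((hNm2 x).mpr (Or.inl rfl)).symm
      · exact absurd hal h1
    rcases eq_or_ne b m₂ with g4 | g4
    · rcases (hNm2 a).mp ((g4 ▸ hab).symm) with hax | hal
      · rw [g4, vm2, hax]
        exact ((hNm1 x).mpr (Or.inl rfl)).symm
      · exact absurd hal h2
    rw [vo b g1 g2 g3 g4]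
    exact hab
  obtain ⟨φ, hφ⟩ := iso_of_invol (G := G) σ hinv hdir
  exact ⟨φ, fun a => (hφ a).trans (hσ a)⟩


lemma walk_stays {s : V → Prop} (hclosed : ∀ a, s a → ∀ b, G.Adj a b → s b) :
    ∀ {a b : V} (q : G.Walk a b), s a → s b := by
  intro a b q
  induction q with
  | nil => exact fun h => h
  | cons hadj q ih => exact fun h => ih (hclosed _ h _ hadj)

lemma leaf_adj_iff [Fintype V] [DecidableRel G.Adj] {l m : V} (hdeg : G.degree l = 1)
    (hm : G.Adj l m) : ∀ w, G.Adj l w ↔ w = m := by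
  intro w
  constructor
  · intro hw
    by_contra hne
    have h2 : 1 < G.degree l := by
      rw [← card_neighborFinset_eq_degree]
      exact Finset.one_lt_card.mpr
        ⟨w, (mem_neighborFinset G l w).2 hw, m, (mem_neighborFinset G l m).2 hm, hne⟩
    omega
  · rintro rfl; exact hm

lemma deg2_adj_iff [Fintype V] [DecidableRel G.Adj] {m a b : V} (hdeg : G.degree m ≤ 2)
    (ha : G.Adj m a) (hb : G.Adj m b) (hab : a ≠ b) : ∀ w, G.Adj m w ↔ w = a ∨ w = b := by
  have hsub : ({a, b} : Finset V) ⊆ G.neighborFinset m := by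
    intro w hw
    rcases Finset.mem_insert.mp hw with rfl | hw
    · exact (mem_neighborFinset G m w).2 ha
    · rw [Finset.mem_singleton] at hw
      rw [hw]
      exact (mem_neighborFinset G m b).2 hb
  have hcard : (G.neighborFinset m).card ≤ ({a, b} : Finset V).card := by
    rw [Finset.card_insert_of_notMem (by simpa using hab), Finset.card_singleton,
      card_neighborFinset_eq_degree]
    exact hdeg
  have heq := Finset.eq_of_subset_of_card_le hsub hcard
  intro w
  rw [← mem_neighborFinset, ← heq]
  simp

lemma leaves_dist [Fintype V] [DecidableRel G.Adj] (hT : G.IsTree) {x l₁ l₂ : V}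
    (hspider : ∀ v, v ≠ x → G.degree v ≤ 2)
    (h1 : G.degree l₁ = 1) (h2 : G.degree l₂ = 1) (hne : l₁ ≠ l₂) :
    G.dist l₁ l₂ = G.dist x l₁ + G.dist x l₂ := by
  have hconn := hT.isConnected
  obtain ⟨p, hp, hpl⟩ := hconn.exists_path_of_dist l₁ l₂
  by_cases hx : x ∈ p.support
  · have hd := mem_support_dist hT hp hx
    have c1 : G.dist l₁ x = G.dist x l₁ := SimpleGraph.dist_comm
    omega
  · exfalso
    have onpath : ∀ w, G.dist l₁ w + G.dist w l₂ = G.dist l₁ l₂ → w ∈ p.support :=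
      fun w hw => mem_support_of_dist_add hT hp hw
    have hclosed : ∀ a ∈ p.support, ∀ b, G.Adj a b → b ∈ p.support := by
      intro a ha b hab
      have hal : G.dist l₁ a + G.dist a l₂ = G.dist l₁ l₂ := mem_support_dist hT hp ha
      rcases eq_or_ne a l₁ with he | ha1
      · rw [he] at hab
        obtain ⟨u, hu, hud⟩ := parent_exists hT (x := l₂) hne
        have hb : b = u := (leaf_adj_iff h1 hu b).mp hab
        rw [hb]
        apply onpath
        have e1 : G.dist l₁ u = 1 := dist_eq_one_iff_adj.2 hu
        have e2 : G.dist u l₂ = G.dist l₂ u := SimpleGraph.dist_comm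
        have e3 : G.dist l₂ l₁ = G.dist l₁ l₂ := SimpleGraph.dist_comm
        omega
      rcases eq_or_ne a l₂ with he | ha2
      · rw [he] at hab
        obtain ⟨u, hu, hud⟩ := parent_exists hT (x := l₁) (Ne.symm hne)
        have hb : b = u := (leaf_adj_iff h2 hu b).mp hab
        rw [hb]
        apply onpath
        have e1 : G.dist l₂ u = 1 := dist_eq_one_iff_adj.2 hu
        have e2 : G.dist l₁ u = G.dist u l₁ := SimpleGraph.dist_comm
        have e4 : G.dist u l₂ = G.dist l₂ u := SimpleGraph.dist_comm
        have e3 : G.dist l₁ l₂ = G.dist l₁ l₂ := rfl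
        omega
      · have hax : a ≠ x := fun h => hx (h ▸ ha)
        obtain ⟨n1, hn1, hd1⟩ := parent_exists hT (x := l₁) ha1
        obtain ⟨n2, hn2, hd2⟩ := parent_exists hT (x := l₂) ha2
        have c1 : G.dist a l₂ = G.dist l₂ a := SimpleGraph.dist_comm
        have hnn : n1 ≠ n2 := by
          intro h
          rw [← h] at hd2
          have tri := hconn.dist_triangle (u := l₁) (v := n1) (w := l₂)
          have c2 : G.dist n1 l₂ = G.dist l₂ n1 := SimpleGraph.dist_comm
          omega
        have hN := deg2_adj_iff (hspider a hax) hn1 hn2 hnn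
        have h1a : G.dist n1 a = 1 := dist_eq_one_iff_adj.2 hn1.symm
        have h2a : G.dist n2 a = 1 := dist_eq_one_iff_adj.2 hn2.symm
        rcases (hN b).mp hab with hbn | hbn
        · rw [hbn]
          apply onpath
          have tri1 := hconn.dist_triangle (u := l₁) (v := n1) (w := l₂)
          have tri2 := hconn.dist_triangle (u := n1) (v := a) (w := l₂)
          omega
        · rw [hbn]
          apply onpath
          have tri1 := hconn.dist_triangle (u := l₁) (v := n2) (w := l₂)
          have tri2 := hconn.dist_triangle (u := l₁) (v := a) (w := n2)
          have c2 : G.dist n2 l₂ = G.dist l₂ n2 := SimpleGraph.dist_comm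
          have c3 : G.dist a n2 = G.dist n2 a := SimpleGraph.dist_comm
          omega
    obtain ⟨q⟩ := hconn l₁ x
    exact hx (walk_stays (s := fun w => w ∈ p.support) hclosed q p.start_mem_support)

end SpiderProofAux

section Main
open SimpleGraph Finset
set_option maxHeartbeats 1000000 in
theorem spider_fixing_density_le
    {V : Type*} [Fintype V] (G : SimpleGraph V) [DecidableRel G.Adj]
    (hT : G.IsTree) (x : V)
    (hspider : ∀ v : V, v ≠ x → G.degree v ≤ 2)
    (hn : 3 ≤ Fintype.card V)
    (h2 : Distinguishable G 2) :
    (fixingNumber G : ℚ) ≤ 4 / 11 * Fintype.card V := by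
  classical
  obtain ⟨c, hc⟩ := h2
  have hconn := hT.isConnected
  have hcard1 : 1 < Fintype.card V := by omega
  haveI : Nonempty V := Fintype.card_pos_iff.mp (by omega)
  have hfixle : ∀ S : Finset V, IsFixingSet G ↑S → fixingNumber G ≤ S.card :=
    fun S hS => Nat.sInf_le ⟨S, rfl, hS⟩
  have hdegpos : ∀ v, 0 < G.degree v := by
    intro v
    obtain ⟨w, hw⟩ := SpiderProofAux.exists_neighbor hconn hcard1 v
    rw [← card_neighborFinset_eq_degree]
    exact Finset.card_pos.2 ⟨w, (mem_neighborFinset G v w).2 hw⟩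
  have key : 11 * fixingNumber G ≤ 4 * Fintype.card V := by
    by_cases hdx : G.degree x ≤ 2
    -- Case A : the graph is a path
    · have hall : ∀ v, G.degree v ≤ 2 := by
        intro v
        by_cases h : v = x
        · rw [h]; exact hdx
        · exact hspider v h
      have hedge : G.edgeFinset.card + 1 = Fintype.card V := hT.card_edgeFinset
      have hsum : ∑ v, G.degree v = 2 * G.edgeFinset.card := G.sum_degrees_eq_twice_card_edges
      set Lv := Finset.univ.filter (fun v => G.degree v = 1) with hLvdef
      have hXsum : ∑ v, ((2 - G.degree v) + G.degree v) = 2 * Fintype.card V := by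
        rw [Finset.sum_congr rfl (fun v _ => by have := hall v; omega : ∀ v ∈ Finset.univ, ((2 - G.degree v) + G.degree v) = 2)]
        simp [mul_comm]
      rw [Finset.sum_add_distrib] at hXsum
      have hLle : Lv.card ≤ ∑ v, (2 - G.degree v) := by
        have ha1 : Lv.card • 1 ≤ ∑ v ∈ Lv, (2 - G.degree v) := Finset.card_nsmul_le_sum Lv _ 1
              (fun v hv => by have := (Finset.mem_filter.mp hv).2; omega)
        have ha2 : ∑ v ∈ Lv, (2 - G.degree v) ≤ ∑ v, (2 - G.degree v) :=
              Finset.sum_le_sum_of_subset (Finset.filter_subset _ _)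
        simpa using ha1.trans ha2
      have hL2 : Lv.card ≤ 2 := by omega
      have hLne : Lv.Nonempty := by
        rw [← Finset.card_pos]
        by_contra h
        push_neg at h
        have hLv0 : Lv.card = 0 := by omega
        have hall2 : ∀ v : V, 2 ≤ G.degree v := by
          intro v
          have h1 : v ∉ Lv := by rw [Finset.card_eq_zero] at hLv0; simp [hLv0]
          have h2 : ¬ G.degree v = 1 := by
            intro hdeg; exact h1 (Finset.mem_filter.mpr ⟨Finset.mem_univ v, hdeg⟩)
          have := hdegpos v
          omega
        have : Finset.univ.card • 2 ≤ ∑ v, G.degree v :=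
          Finset.card_nsmul_le_sum _ _ 2 (fun v _ => hall2 v)
        simp only [smul_eq_mul, Finset.card_univ] at this
        omega
      obtain ⟨l, hl⟩ := hLne
      have hld : G.degree l = 1 := (Finset.mem_filter.mp hl).2
      have hfix : IsFixingSet G ({l} : Finset V) := by
        intro φ hφ
        have hfl : φ l = l := hφ l (by simp)
        have hleaf : ∀ v, G.degree v = 1 → φ v = v := by
          intro v hv
          by_cases hvl : v = l
          · rw [hvl]; exact hfl
          · by_contra hne
            have hφv : G.degree (φ v) = 1 := by rw [SpiderProofAux.iso_degree φ v]; exact hv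
            have hφvl : φ v ≠ l := by
              intro h
              exact hvl (φ.injective (by rw [h, hfl]))
            have h3 : ({l, v, φ v} : Finset V) ⊆ Lv := by
              intro w hw
              simp only [Finset.mem_insert, Finset.mem_singleton] at hw
              rcases hw with rfl | rfl | rfl <;>
                exact Finset.mem_filter.mpr ⟨Finset.mem_univ _, by assumption⟩
            have hc3 : ({l, v, φ v} : Finset V).card = 3 := by
              rw [Finset.card_insert_of_notMem (by simp [Ne.symm hvl, Ne.symm hφvl]),
                Finset.card_insert_of_notMem (by simpa using fun h => hne h.symm),
                Finset.card_singleton]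
            have := Finset.card_le_card h3
            omega
        exact SpiderProofAux.fix_all hT l φ hfl hleaf
      have hF := hfixle {l} hfix
      rw [Finset.card_singleton] at hF
      omega
    -- Case B : genuine spider with center x
    · push_neg at hdx
      set Lv := Finset.univ.filter (fun v => G.degree v = 1) with hLvdef
      have hmemLv : ∀ v, v ∈ Lv ↔ G.degree v = 1 := by
        intro v; simp [hLvdef]
      have hxnl : ∀ l, l ∈ Lv → l ≠ x := by
        intro l hl h
        rw [hmemLv] at hl
        rw [h] at hl
        omega
      have hdpos : ∀ l ∈ Lv, 0 < G.dist x l :=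
        fun l hl => hconn.pos_dist_of_ne (fun h => hxnl l hl h.symm)
      set dfun : V → ℕ := fun l => G.dist x l with hdfun
      set dv := Lv.image dfun with hdvdef
      have hrepex : ∀ k ∈ dv, ∃ l, l ∈ Lv ∧ dfun l = k := by
        intro k hk
        obtain ⟨l, hl, he⟩ := Finset.mem_image.mp hk
        exact ⟨l, hl, he⟩
      choose! rep hrepL hrepd using hrepex
      set R := dv.image rep with hRdef
      have hRsub : R ⊆ Lv := by
        intro r hr
        obtain ⟨k, hk, rfl⟩ := Finset.mem_image.mp hr
        exact hrepL k hk
      have hRcard : R.card = dv.card := Finset.card_image_of_injOn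
        (fun k1 h1 k2 h2 he => by rw [← hrepd k1 h1, ← hrepd k2 h2, he])
      set S := Lv \ R with hSdef
      have hScard : S.card = Lv.card - dv.card := by
        rw [hSdef, Finset.card_sdiff_of_subset hRsub, hRcard]
      -- S is a fixing set
      have hfix : IsFixingSet G ↑S := by
        intro φ hφ
        have hφx : φ x = x := by
          by_contra h
          have h1 := SpiderProofAux.iso_degree φ x
          have h2 := hspider (φ x) h
          omega
        have hdist : ∀ v, G.dist x (φ v) = G.dist x v := by
          intro v
          conv_lhs => rw [← hφx]
          exact SpiderProofAux.iso_dist hconn φ x v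
        have hleaf : ∀ v, G.degree v = 1 → φ v = v := by
          intro v hv
          have hvL : v ∈ Lv := (hmemLv v).mpr hv
          by_cases hvS : v ∈ S
          · exact hφ v (Finset.mem_coe.mpr hvS)
          · have hvR : v ∈ R := by
              by_contra h
              exact hvS (Finset.mem_sdiff.mpr ⟨hvL, h⟩)
            have hφvL : φ v ∈ Lv := by
              rw [hmemLv, SpiderProofAux.iso_degree φ v]
              exact hv
            by_cases hφS : φ v ∈ S
            · have h1 : φ (φ v) = φ v := hφ (φ v) (Finset.mem_coe.mpr hφS)
              have h2 : φ v = v := φ.injective h1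
              exact absurd (h2 ▸ hφS) hvS
            · have hφvR : φ v ∈ R := by
                by_contra h
                exact hφS (Finset.mem_sdiff.mpr ⟨hφvL, h⟩)
              obtain ⟨k1, hk1, he1⟩ := Finset.mem_image.mp hvR
              obtain ⟨k2, hk2, he2⟩ := Finset.mem_image.mp hφvR
              have hkk : k1 = k2 := by
                rw [← hrepd k1 hk1, ← hrepd k2 hk2, he1, he2, hdfun]
                exact (hdist v).symm
              rw [← he2, ← hkk, he1]
        exact SpiderProofAux.fix_all hT x φ hφx hleaf
      have hF : fixingNumber G ≤ Lv.card - dv.card := hScard ▸ hfixle S hfix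
      -- counting : the branches are disjoint
      have hpaths : ∀ l ∈ Lv, ∃ p : G.Walk x l, p.IsPath ∧ p.length = G.dist x l :=
        fun l _ => hconn.exists_path_of_dist x l
      choose pa hpa hpl using hpaths
      set A : V → Finset V :=
        fun l => if h : l ∈ Lv then ((pa l h).support.toFinset.erase x) else ∅ with hAdef
      have hAeq : ∀ l (hl : l ∈ Lv), A l = ((pa l hl).support.toFinset.erase x) := by
        intro l hl
        rw [hAdef]
        exact dif_pos hl
      have hAmem : ∀ l (hl : l ∈ Lv) (v : V), v ∈ A l ↔ (v ≠ x ∧ v ∈ (pa l hl).support) := by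
        intro l hl v
        rw [hAeq l hl]
        simp [Finset.mem_erase, List.mem_toFinset]
      have hAcard : ∀ l ∈ Lv, (A l).card = G.dist x l := by
        intro l hl
        have hnodup := (hpa l hl).support_nodup
        rw [hAeq l hl]
        rw [Finset.card_erase_of_mem (by rw [List.mem_toFinset]; exact (pa l hl).start_mem_support),
          List.toFinset_card_of_nodup hnodup, SimpleGraph.Walk.length_support, hpl l hl]
        omega
      have hAdisj : ∀ l1 ∈ Lv, ∀ l2 ∈ Lv, l1 ≠ l2 → Disjoint (A l1) (A l2) := by
        intro l1 h1 l2 h2 hne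
        rw [Finset.disjoint_left]
        intro v hv1 hv2
        rw [hAmem l1 h1] at hv1
        rw [hAmem l2 h2] at hv2
        have e1 := SpiderProofAux.mem_support_dist hT (hpa l1 h1) hv1.2
        have e2 := SpiderProofAux.mem_support_dist hT (hpa l2 h2) hv2.2
        have hdl := SpiderProofAux.leaves_dist hT (x := x) hspider
          ((hmemLv l1).mp h1) ((hmemLv l2).mp h2) hne
        have tri := hconn.dist_triangle (u := l1) (v := v) (w := l2)
        have hpos : 0 < G.dist x v := hconn.pos_dist_of_ne (Ne.symm hv1.1)
        have c1 : G.dist v l1 = G.dist l1 v := SimpleGraph.dist_comm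
        omega
      have hbiU : (Lv.biUnion A).card = ∑ l ∈ Lv, G.dist x l := by
        rw [Finset.card_biUnion hAdisj]
        exact Finset.sum_congr rfl hAcard
      have hsub : Lv.biUnion A ⊆ Finset.univ.erase x := by
        intro v hv
        obtain ⟨l, hl, hvl⟩ := Finset.mem_biUnion.mp hv
        rw [hAmem l hl] at hvl
        exact Finset.mem_erase.mpr ⟨hvl.1, Finset.mem_univ v⟩
      have hsumd : 1 + ∑ l ∈ Lv, G.dist x l ≤ Fintype.card V := by
        have := Finset.card_le_card hsub
        rw [hbiU, Finset.card_erase_of_mem (Finset.mem_univ x), Finset.card_univ] at this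
        omega
      -- the distance-class counts
      set m1 := (Lv.filter (fun l => G.dist x l = 1)).card with hm1def
      set m2 := (Lv.filter (fun l => G.dist x l = 2)).card with hm2def
      have hsum3 : 3 * Lv.card ≤ (∑ l ∈ Lv, G.dist x l) + (2 * m1 + m2) := by
        have hpt : ∀ l ∈ Lv, 3 ≤ G.dist x l +
            (2 * (if G.dist x l = 1 then 1 else 0) + (if G.dist x l = 2 then 1 else 0)) := by
          intro l hl
          have := hdpos l hl
          split_ifs <;> omega
        have hsmul : Lv.card • 3 ≤ ∑ l ∈ Lv, (G.dist x l +
            (2 * (if G.dist x l = 1 then 1 else 0) + (if G.dist x l = 2 then 1 else 0))) :=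
          Finset.card_nsmul_le_sum _ _ _ hpt
        rw [Finset.sum_add_distrib, Finset.sum_add_distrib, ← Finset.mul_sum,
          Finset.sum_boole, Finset.sum_boole, smul_eq_mul] at hsmul
        simp only [Nat.cast_id] at hsmul
        omega
      have hm1m2 : m1 + m2 ≤ Lv.card := by
        have hdisj : Disjoint (Lv.filter (fun l => G.dist x l = 1))
            (Lv.filter (fun l => G.dist x l = 2)) := by
          rw [Finset.disjoint_left]
          intro a ha1 ha2
          have e1 := (Finset.mem_filter.mp ha1).2
          have e2 := (Finset.mem_filter.mp ha2).2
          omega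
        have := Finset.card_union_of_disjoint hdisj
        have hsub2 : (Lv.filter (fun l => G.dist x l = 1)) ∪
            (Lv.filter (fun l => G.dist x l = 2)) ⊆ Lv :=
          Finset.union_subset (Finset.filter_subset _ _) (Finset.filter_subset _ _)
        have := Finset.card_le_card hsub2
        omega
      have hDleL : dv.card ≤ Lv.card := Finset.card_image_le
      -- m1 ≤ 2
      have hm1le : m1 ≤ 2 := by
        by_contra hcon
        push_neg at hcon
        have hmap : ∀ l ∈ Lv.filter (fun l => G.dist x l = 1),
            c l ∈ (Finset.univ : Finset (Fin 2)) := fun _ _ => Finset.mem_univ _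
        obtain ⟨u, hu, v, hv, huv, hcuv⟩ :=
          Finset.exists_ne_map_eq_of_card_lt_of_maps_to (by rw [hm1def] at hcon; simpa using hcon) hmap
        have hud : G.degree u = 1 := (hmemLv u).mp (Finset.mem_filter.mp hu).1
        have hvd : G.degree v = 1 := (hmemLv v).mp (Finset.mem_filter.mp hv).1
        have hux : G.Adj x u := SimpleGraph.dist_eq_one_iff_adj.mp (Finset.mem_filter.mp hu).2
        have hvx : G.Adj x v := SimpleGraph.dist_eq_one_iff_adj.mp (Finset.mem_filter.mp hv).2
        have hNu := SpiderProofAux.leaf_adj_iff hud hux.symm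
        have hNv := SpiderProofAux.leaf_adj_iff hvd hvx.symm
        have hN : ∀ w, G.Adj u w ↔ G.Adj v w := fun w => by rw [hNu w, hNv w]
        obtain ⟨φ, hφ⟩ := SpiderProofAux.swap_iso huv hN
        have hpres : ∀ a, c (φ a) = c a := by
          intro a
          rw [hφ]
          rcases eq_or_ne a u with h | h
          · rw [h, Equiv.swap_apply_left]; exact hcuv.symm
          rcases eq_or_ne a v with h2 | h2
          · rw [h2, Equiv.swap_apply_right]; exact hcuv
          · rw [Equiv.swap_apply_of_ne_of_ne h h2]
        have := hc φ hpres u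
        rw [hφ u, Equiv.swap_apply_left] at this
        exact huv this.symm
      -- m2 ≤ 4
      have hm2le : m2 ≤ 4 := by
        by_contra hcon
        push_neg at hcon
        set Lv2 := Lv.filter (fun l => G.dist x l = 2) with hLv2def
        have hmid : ∀ l ∈ Lv2, ∃ u, G.Adj l u ∧ G.dist x u + 1 = G.dist x l :=
          fun l hl => SpiderProofAux.parent_exists hT
            (hxnl l (Finset.mem_filter.mp hl).1)
        choose! mid hmadj hmdist using hmid
        have hmap : ∀ l ∈ Lv2, (c (mid l), c l) ∈ (Finset.univ : Finset (Fin 2 × Fin 2)) :=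
          fun _ _ => Finset.mem_univ _
        obtain ⟨l1, hl1, l2, hl2, hll, hpeq⟩ :=
          Finset.exists_ne_map_eq_of_card_lt_of_maps_to
            (by rw [hm2def] at hcon; simpa using hcon) hmap
        rw [Prod.mk.injEq] at hpeq
        have hd1 : G.dist x l1 = 2 := (Finset.mem_filter.mp hl1).2
        have hd2 : G.dist x l2 = 2 := (Finset.mem_filter.mp hl2).2
        have hdeg1 : G.degree l1 = 1 := (hmemLv l1).mp (Finset.mem_filter.mp hl1).1
        have hdeg2 : G.degree l2 = 1 := (hmemLv l2).mp (Finset.mem_filter.mp hl2).1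
        have hmd1 : G.dist x (mid l1) = 1 := by have := hmdist l1 hl1; omega
        have hmd2 : G.dist x (mid l2) = 1 := by have := hmdist l2 hl2; omega
        have hma1 : G.Adj x (mid l1) := SimpleGraph.dist_eq_one_iff_adj.mp hmd1
        have hma2 : G.Adj x (mid l2) := SimpleGraph.dist_eq_one_iff_adj.mp hmd2
        have hNl1 := SpiderProofAux.leaf_adj_iff hdeg1 (hmadj l1 hl1)
        have hNl2 := SpiderProofAux.leaf_adj_iff hdeg2 (hmadj l2 hl2)
        have hxl1 : x ≠ l1 := fun h => by rw [← h, SimpleGraph.dist_self] at hd1; omega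
        have hxl2 : x ≠ l2 := fun h => by rw [← h, SimpleGraph.dist_self] at hd2; omega
        have hxm1 : x ≠ mid l1 := fun h => by rw [← h, SimpleGraph.dist_self] at hmd1; omega
        have hxm2 : x ≠ mid l2 := fun h => by rw [← h, SimpleGraph.dist_self] at hmd2; omega
        have hlm11 : l1 ≠ mid l1 := fun h => by rw [h, hmd1] at hd1; omega
        have hlm12 : l1 ≠ mid l2 := fun h => by rw [h, hmd2] at hd1; omega
        have hlm21 : l2 ≠ mid l1 := fun h => by rw [h, hmd1] at hd2; omega
        have hlm22 : l2 ≠ mid l2 := fun h => by rw [h, hmd2] at hd2; omega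
        have hNm1 := SpiderProofAux.deg2_adj_iff
          (hspider (mid l1) (Ne.symm hxm1)) hma1.symm (hmadj l1 hl1).symm hxl1
        have hNm2 := SpiderProofAux.deg2_adj_iff
          (hspider (mid l2) (Ne.symm hxm2)) hma2.symm (hmadj l2 hl2).symm hxl2
        have hmm : mid l1 ≠ mid l2 := by
          intro h
          have := (hNm1 l2).mp (by rw [h]; exact (hmadj l2 hl2).symm)
          rcases this with h' | h'
          · exact hxl2 h'.symm
          · exact hll h'.symm
        obtain ⟨φ, hφ⟩ := SpiderProofAux.double_swap_iso hll hmm hlm11 hlm12 hlm21 hlm22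
          hxl1 hxl2 hxm1 hxm2 hNl1 hNl2 hNm1 hNm2
        have hpres : ∀ a, c (φ a) = c a := by
          intro a
          rw [hφ]
          rcases eq_or_ne a l1 with h | h1
          · rw [h, Equiv.swap_apply_of_ne_of_ne hlm11 hlm12, Equiv.swap_apply_left]
            exact hpeq.2.symm
          rcases eq_or_ne a l2 with h | h2
          · rw [h, Equiv.swap_apply_of_ne_of_ne hlm21 hlm22, Equiv.swap_apply_right]
            exact hpeq.2
          rcases eq_or_ne a (mid l1) with h | h3
          · rw [h, Equiv.swap_apply_left,
              Equiv.swap_apply_of_ne_of_ne (Ne.symm hlm12) (Ne.symm hlm22)]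
            exact hpeq.1.symm
          rcases eq_or_ne a (mid l2) with h | h4
          · rw [h, Equiv.swap_apply_right,
              Equiv.swap_apply_of_ne_of_ne (Ne.symm hlm11) (Ne.symm hlm21)]
            exact hpeq.1
          · rw [Equiv.swap_apply_of_ne_of_ne h3 h4, Equiv.swap_apply_of_ne_of_ne h1 h2]
        have := hc φ hpres l1
        rw [hφ l1, Equiv.swap_apply_of_ne_of_ne hlm11 hlm12, Equiv.swap_apply_left] at this
        exact hll this.symm
      -- lower bounds on the number of distance classes
      have hDany : 0 < m1 → 0 < m2 → 2 ≤ dv.card := by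
        intro h1 h2
        obtain ⟨a, ha⟩ := Finset.card_pos.mp h1
        obtain ⟨b, hb⟩ := Finset.card_pos.mp h2
        have h1v : (1 : ℕ) ∈ dv := Finset.mem_image.mpr
          ⟨a, (Finset.mem_filter.mp ha).1, (Finset.mem_filter.mp ha).2⟩
        have h2v : (2 : ℕ) ∈ dv := Finset.mem_image.mpr
          ⟨b, (Finset.mem_filter.mp hb).1, (Finset.mem_filter.mp hb).2⟩
        have : ({1, 2} : Finset ℕ) ⊆ dv := by
          intro k hk
          rcases Finset.mem_insert.mp hk with rfl | hk
          · exact h1v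
          · rw [Finset.mem_singleton] at hk; rw [hk]; exact h2v
        have := Finset.card_le_card this
        simpa using this
      have hD1 : 0 < m1 → 1 ≤ dv.card := by
        intro h1
        obtain ⟨a, ha⟩ := Finset.card_pos.mp h1
        exact Finset.card_pos.mpr ⟨dfun a, Finset.mem_image.mpr
          ⟨a, (Finset.mem_filter.mp ha).1, rfl⟩⟩
      have hD2 : 0 < m2 → 1 ≤ dv.card := by
        intro h1
        obtain ⟨a, ha⟩ := Finset.card_pos.mp h1
        exact Finset.card_pos.mpr ⟨dfun a, Finset.mem_image.mpr
          ⟨a, (Finset.mem_filter.mp ha).1, rfl⟩⟩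
      rcases Nat.eq_zero_or_pos m1 with h1 | h1 <;> rcases Nat.eq_zero_or_pos m2 with h2 | h2
      · omega
      · have := hD2 h2; omega
      · have := hD1 h1; omega
      · have := hDany h1 h2; omega

  have hq := (Nat.cast_le (α := ℚ)).mpr key
  push_cast at hq
  linarith

end Main
end

section
/- If T is a 2-distinguishable tree of order n ≥ 3, then its fixing number satisfies F(T) ≤ 4n/11. -/
open SimpleGraph

/-!
Root the tree at a vertex `r` minimising the total distance to all vertices. Two such minimisers
are adjacent, so an automorphism fixing some vertex also fixes `r`.

Call the branch at `b` free if no vertex in it has two children whose branches have the same size.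
Mark, at every vertex `p`, all free children of `p` except the least one of each branch size. An
automorphism fixing `r` and a vertex `x` fixes every ancestor of `x`; every non-free branch contains
a marked vertex, and a free child of a fixed vertex can only be moved to a free sibling with a branch
of the same size. Hence the marked vertices form a fixing set, or `{r}` does if nothing is marked.

For the count, charge the marked children of `p` to its territory: `p` and the branches of its free
children. Territories of vertices with a marked child are disjoint, and a distinguishing 2-colouring
allows at most two leaf children and four pendant-edge children of `p`, which gives
`11 · #marked ≤ 4 · #territory` at each `p`.
-/

open Finset
open scoped Classical

theorem Equiv.comp_swap_eq_self {α β : Type*} [DecidableEq α] {c : α → β} {x y : α}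
    (h : c x = c y) : c ∘ Equiv.swap x y = c := by
  rw [Equiv.comp_swap_eq_update, h, Function.update_eq_self, ← h, Function.update_eq_self]

theorem Equiv.involutive_swap_comp_swap {α : Type*} [DecidableEq α] {a b c d : α} (hac : a ≠ c)
    (had : a ≠ d) (hbc : b ≠ c) (hbd : b ≠ d) :
    Function.Involutive (Equiv.swap a b ∘ Equiv.swap c d) := by
  intro z
  simp only [Function.comp_apply, Equiv.swap_apply_def]
  split_ifs <;> grind

namespace SimpleGraph

section General

variable {V V' : Type*} {G : SimpleGraph V} {G' : SimpleGraph V'}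

lemma Iso.dist_le (φ : G ≃g G') (u v : V) : G'.dist (φ u) (φ v) ≤ G.dist u v := by
  by_cases h : G.Reachable u v
  · obtain ⟨p, hp⟩ := h.exists_walk_length_eq_dist
    simpa [hp] using SimpleGraph.dist_le (p.map φ.toHom)
  · simp [dist_eq_zero_of_not_reachable (mt Iso.reachable_iff.1 h)]

lemma Iso.dist_eq (φ : G ≃g G') (u v : V) : G'.dist (φ u) (φ v) = G.dist u v :=
  (φ.dist_le u v).antisymm (by simpa using φ.symm.dist_le (φ u) (φ v))

lemma exists_adj_dist_eq_of_dist_eq_add_one {u v : V} {k : ℕ} (h : G.dist u v = k + 1) :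
    ∃ w, G.Adj w v ∧ G.dist u w = k := by
  obtain ⟨p, hp⟩ := exists_walk_of_dist_ne_zero (G := G) (u := u) (v := v) (by omega)
  have hnil : ¬p.Nil := fun hn => by simp [hn.length_eq_zero] at hp; omega
  have hadj := p.adj_penultimate hnil
  refine ⟨p.penultimate, hadj, le_antisymm ?_ ?_⟩
  · simpa [hp, h] using dist_le p.dropLast
  · have := hadj.reachable.dist_triangle_right u
    rw [dist_eq_one_iff_adj.2 hadj] at this
    omega

lemma IsTree.eq_of_adj_of_dist_add_one (hT : G.IsTree) {x y₁ y₂ z : V} (h₁ : G.Adj y₁ z)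
    (h₂ : G.Adj y₂ z) (hd₁ : G.dist x y₁ + 1 = G.dist x z) (hd₂ : G.dist x y₂ + 1 = G.dist x z) :
    y₁ = y₂ := by
  obtain ⟨p₁, hp₁⟩ := (hT.connected x y₁).exists_walk_length_eq_dist
  obtain ⟨p₂, hp₂⟩ := (hT.connected x y₂).exists_walk_length_eq_dist
  have hq₁ := (p₁.concat h₁).isPath_of_length_eq_dist (by simp [hp₁, hd₁])
  have hq₂ := (p₂.concat h₂).isPath_of_length_eq_dist (by simp [hp₂, hd₂])
  simpa using congrArg Walk.penultimate ((hT.existsUnique_path x z).unique hq₁ hq₂)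

lemma exists_iso_of_involutive {f : V → V} (hf : Function.Involutive f)
    (hadj : ∀ u v, G.Adj u v → G.Adj (f u) (f v)) : ∃ φ : G ≃g G, ⇑φ = f :=
  ⟨⟨hf.toPerm f, fun {u v} => ⟨fun h => by simpa [hf u, hf v] using hadj _ _ h, hadj u v⟩⟩, rfl⟩

lemma exists_iso_swap_of_adj_iff {x y : V} (h : ∀ z, G.Adj x z ↔ G.Adj y z) :
    ∃ φ : G ≃g G, ⇑φ = Equiv.swap x y := by
  refine exists_iso_of_involutive (Equiv.swap_apply_self x y) fun u v huv => ?_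
  have hxy : ¬G.Adj x y := fun hxy => G.irrefl ((h y).1 hxy)
  simp only [Equiv.swap_apply_def]
  split_ifs <;> subst_vars <;> grind [Adj.symm]

lemma exists_iso_swap_swap {p b₁ b₂ c₁ c₂ : V} (hb : b₁ ≠ b₂)
    (hb₁ : ∀ z, G.Adj b₁ z ↔ z = p ∨ z = c₁) (hb₂ : ∀ z, G.Adj b₂ z ↔ z = p ∨ z = c₂)
    (hc₁ : ∀ z, G.Adj c₁ z ↔ z = b₁) (hc₂ : ∀ z, G.Adj c₂ z ↔ z = b₂) :
    ∃ φ : G ≃g G, ⇑φ = Equiv.swap b₁ b₂ ∘ Equiv.swap c₁ c₂ ∧ φ b₁ = b₂ := by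
  have hb₁p : G.Adj b₁ p := (hb₁ p).2 (.inl rfl)
  have hb₂p : G.Adj b₂ p := (hb₂ p).2 (.inl rfl)
  have hb₁c₁ : G.Adj b₁ c₁ := (hb₁ c₁).2 (.inr rfl)
  have hb₂c₂ : G.Adj b₂ c₂ := (hb₂ c₂).2 (.inr rfl)
  have hpc₁ : p ≠ c₁ := by rintro rfl; grind [Adj.symm]
  have hpc₂ : p ≠ c₂ := by rintro rfl; grind [Adj.symm]
  have hb₁c₂ : b₁ ≠ c₂ := by rintro rfl; grind [Adj.symm]
  have hb₂c₁ : b₂ ≠ c₁ := by rintro rfl; grind [Adj.symm]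
  set f := Equiv.swap b₁ b₂ ∘ Equiv.swap c₁ c₂
  have hf : ∀ z, z ≠ b₁ → z ≠ b₂ → z ≠ c₁ → z ≠ c₂ → f z = z := fun z h₁ h₂ h₃ h₄ => by
    simp [f, Equiv.swap_apply_of_ne_of_ne, *]
  have hfb₁ : f b₁ = b₂ := by simp [f, Equiv.swap_apply_of_ne_of_ne, hb₁c₁.ne, hb₁c₂]
  have hfb₂ : f b₂ = b₁ := by simp [f, Equiv.swap_apply_of_ne_of_ne, hb₂c₁, hb₂c₂.ne]
  have hfc₁ : f c₁ = c₂ := by simp [f, Equiv.swap_apply_of_ne_of_ne, hb₁c₂.symm, hb₂c₂.ne']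
  have hfc₂ : f c₂ = c₁ := by simp [f, Equiv.swap_apply_of_ne_of_ne, hb₁c₁.ne', hb₂c₁.symm]
  have hfp : f p = p := hf p hb₁p.ne' hb₂p.ne' hpc₁ hpc₂
  have hmoved : ∀ u v, (u = b₁ ∨ u = b₂ ∨ u = c₁ ∨ u = c₂) → G.Adj u v → G.Adj (f u) (f v) := by
    rintro u v (rfl | rfl | rfl | rfl) huv
    · obtain rfl | rfl := (hb₁ v).1 huv <;> simpa [hfb₁, hfp, hfc₁]
    · obtain rfl | rfl := (hb₂ v).1 huv <;> simpa [hfb₂, hfp, hfc₂]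
    · obtain rfl := (hc₁ v).1 huv; simpa [hfc₁, hfb₁] using hb₂c₂.symm
    · obtain rfl := (hc₂ v).1 huv; simpa [hfc₂, hfb₂] using hb₁c₁.symm
  have hadj : ∀ u v, G.Adj u v → G.Adj (f u) (f v) := by
    intro u v huv
    by_cases hu : u = b₁ ∨ u = b₂ ∨ u = c₁ ∨ u = c₂
    · exact hmoved u v hu huv
    by_cases hv : v = b₁ ∨ v = b₂ ∨ v = c₁ ∨ v = c₂
    · exact (hmoved v u hv huv.symm).symm
    push Not at hu hv
    rwa [hf u hu.1 hu.2.1 hu.2.2.1 hu.2.2.2, hf v hv.1 hv.2.1 hv.2.2.1 hv.2.2.2]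
  obtain ⟨φ, hφ⟩ := exists_iso_of_involutive
    (Equiv.involutive_swap_comp_swap hb₁c₁.ne hb₁c₂ hb₂c₁ hb₂c₂.ne) hadj
  exact ⟨φ, hφ, hφ ▸ hfb₁⟩

end General

section Rooted

variable {V V' : Type*} {G : SimpleGraph V} {G' : SimpleGraph V'}

variable (G) in
def IsChild (r p b : V) : Prop := G.Adj p b ∧ G.dist r b = G.dist r p + 1

variable {r p b x y : V}

lemma exists_isChild_of_dist_eq_add_one {k : ℕ} (h : G.dist r b = k + 1) :
    ∃ p, G.IsChild r p b ∧ G.dist r p = k := by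
  obtain ⟨p, hp, hd⟩ := exists_adj_dist_eq_of_dist_eq_add_one h
  exact ⟨p, ⟨hp, by omega⟩, hd⟩

lemma IsTree.isChild_or_isChild_of_adj (hT : G.IsTree) (r : V) (h : G.Adj x y) :
    G.IsChild r x y ∨ G.IsChild r y x := by
  rcases hT.dist_eq_dist_add_one_of_adj r h with hd | hd
  · exact Or.inr ⟨h.symm, hd⟩
  · exact Or.inl ⟨h, hd⟩

lemma IsTree.isChild_unique (hT : G.IsTree) {p' : V} (h : G.IsChild r p b)
    (h' : G.IsChild r p' b) : p = p' :=
  hT.eq_of_adj_of_dist_add_one h.1 h'.1 h.2.symm h'.2.symm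

lemma IsTree.adj_iff_of_isChild (hT : G.IsTree) (h : G.IsChild r p b) :
    G.Adj b y ↔ y = p ∨ G.IsChild r b y := by
  refine ⟨fun hy => (hT.isChild_or_isChild_of_adj r hy).symm.imp_left
    (fun hyb => hT.isChild_unique hyb h), ?_⟩
  rintro (rfl | hy)
  exacts [h.1.symm, hy.1]

lemma IsChild.map (φ : G ≃g G') (h : G.IsChild r p b) : G'.IsChild (φ r) (φ p) (φ b) :=
  ⟨φ.map_adj_iff.2 h.1, by rw [φ.dist_eq, φ.dist_eq]; exact h.2⟩

variable [Fintype V]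

variable (G) in
/-- The branch at `b` of the tree rooted at `r`: the vertices `x` with `b` on the path from `r`
to `x`. -/
noncomputable def subtree (r b : V) : Finset V :=
  {x | G.dist r x = G.dist r b + G.dist b x}

lemma mem_subtree : x ∈ G.subtree r b ↔ G.dist r x = G.dist r b + G.dist b x := by
  simp [subtree]

lemma mem_subtree_self (r b : V) : b ∈ G.subtree r b := by simp [mem_subtree]

lemma one_le_card_subtree (r b : V) : 1 ≤ #(G.subtree r b) :=
  card_pos.2 ⟨b, mem_subtree_self r b⟩

lemma IsChild.mem_subtree (h : G.IsChild r p b) : b ∈ G.subtree r p := by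
  rw [SimpleGraph.mem_subtree, h.2, dist_eq_one_iff_adj.2 h.1]

lemma IsTree.subtree_subset (hT : G.IsTree) (hx : x ∈ G.subtree r b) :
    G.subtree r x ⊆ G.subtree r b := by
  intro y hy
  rw [mem_subtree] at hx hy ⊢
  have := hT.connected.dist_triangle (u := b) (v := x) (w := y)
  have := hT.connected.dist_triangle (u := r) (v := b) (w := y)
  omega

lemma IsTree.dist_lt_of_mem_subtree (hT : G.IsTree) (hx : x ∈ G.subtree r b) (hne : x ≠ b) :
    G.dist r b < G.dist r x := by
  have := hT.connected.pos_dist_of_ne hne.symm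
  rw [mem_subtree] at hx
  omega

lemma IsTree.mem_subtree_of_isChild (hT : G.IsTree) (hx : x ∈ G.subtree r b) (hne : x ≠ b)
    (hpx : G.IsChild r p x) : p ∈ G.subtree r b := by
  obtain ⟨k, hk⟩ := Nat.exists_eq_add_one_of_ne_zero (hT.connected.pos_dist_of_ne hne.symm).ne'
  obtain ⟨w, hwx, hw⟩ := exists_adj_dist_eq_of_dist_eq_add_one hk
  rw [mem_subtree] at hx
  have : G.dist r x ≤ G.dist r w + 1 := by
    simpa [dist_eq_one_iff_adj.2 hwx] using hwx.reachable.dist_triangle_right r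
  have := hT.connected.dist_triangle (u := r) (v := b) (w := w)
  obtain rfl : w = p := hT.isChild_unique ⟨hwx, by omega⟩ hpx
  rw [mem_subtree]
  have := hpx.2
  omega

lemma IsTree.eq_of_mem_subtree_of_dist_eq (hT : G.IsTree) {b' : V} (hx : x ∈ G.subtree r b)
    (hx' : x ∈ G.subtree r b') (hd : G.dist r b = G.dist r b') : b = b' := by
  induction hn : G.dist r x using Nat.strong_induction_on generalizing x with
  | _ n ih =>
    by_cases hxb : x = b
    · subst hxb
      rw [mem_subtree, hd] at hx'
      exact hT.connected.dist_eq_zero_iff.1 (by omega) |>.symm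
    by_cases hxb' : x = b'
    · subst hxb'
      rw [mem_subtree, ← hd] at hx
      exact hT.connected.dist_eq_zero_iff.1 (by omega)
    have hlt := hT.dist_lt_of_mem_subtree hx hxb
    obtain ⟨k, hk⟩ := Nat.exists_eq_add_one_of_ne_zero (n := G.dist r x) (by omega)
    obtain ⟨p, hpx, hp⟩ := exists_isChild_of_dist_eq_add_one hk
    exact ih _ (by omega) (hT.mem_subtree_of_isChild hx hxb hpx)
      (hT.mem_subtree_of_isChild hx' hxb' hpx) rfl

lemma IsTree.mem_subtree_of_dist_le (hT : G.IsTree) {b' : V} (hx : x ∈ G.subtree r b)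
    (hx' : x ∈ G.subtree r b') (hd : G.dist r b ≤ G.dist r b') : b' ∈ G.subtree r b := by
  induction hn : G.dist r b' generalizing b' with
  | zero =>
    obtain rfl := hT.eq_of_mem_subtree_of_dist_eq hx hx' (by omega)
    exact mem_subtree_self r b
  | succ k ih =>
    rcases hd.eq_or_lt with hd | hd
    · obtain rfl := hT.eq_of_mem_subtree_of_dist_eq hx hx' hd
      exact mem_subtree_self r b
    obtain ⟨p, hpb', hp⟩ := exists_isChild_of_dist_eq_add_one hn
    exact hT.subtree_subset (ih (hT.subtree_subset hpb'.mem_subtree hx') (by omega) hp)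
      hpb'.mem_subtree

lemma IsTree.disjoint_subtree (hT : G.IsTree) {b' : V} (hd : G.dist r b = G.dist r b')
    (hne : b ≠ b') : Disjoint (G.subtree r b) (G.subtree r b') :=
  Finset.disjoint_left.2 fun _ hx hx' => hne (hT.eq_of_mem_subtree_of_dist_eq hx hx' hd)

variable [Fintype V']

lemma Iso.apply_mem_subtree_iff (φ : G ≃g G') :
    φ x ∈ G'.subtree (φ r) (φ b) ↔ x ∈ G.subtree r b := by
  simp only [mem_subtree, φ.dist_eq]

lemma Iso.card_subtree (φ : G ≃g G') (r b : V) :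
    #(G'.subtree (φ r) (φ b)) = #(G.subtree r b) := by
  rw [← card_map φ.toEquiv.toEmbedding]
  congr 1
  ext y
  obtain ⟨x, rfl⟩ := φ.surjective y
  rw [φ.apply_mem_subtree_iff]
  exact (mem_map' φ.toEquiv.toEmbedding).symm

end Rooted

section Centroid

variable {V : Type*} [Fintype V] {G : SimpleGraph V} {u v w : V}

variable (G) in
noncomputable def distSum (v : V) : ℕ := ∑ x, G.dist x v

variable (G) in
/-- The vertices closer to `v` than to `u`; for an edge `uv` of a tree, this is the component
of `v` after deleting the edge. -/
noncomputable def edgeSide (u v : V) : Finset V := {x | G.dist x v < G.dist x u}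

lemma Iso.distSum_eq (φ : G ≃g G) (v : V) : G.distSum (φ v) = G.distSum v := by
  unfold distSum
  rw [← Equiv.sum_comp φ.toEquiv]
  exact sum_congr rfl fun x _ => φ.dist_eq x v

lemma IsTree.distSum_add_card_edgeSide (hT : G.IsTree) (h : G.Adj u v) :
    G.distSum u + #(G.edgeSide v u) = G.distSum v + #(G.edgeSide u v) := by
  simp only [distSum, edgeSide, card_filter, ← sum_add_distrib]
  refine sum_congr rfl fun x _ => ?_
  rcases hT.dist_eq_dist_add_one_of_adj x h with hd | hd <;> split_ifs <;> omega

lemma IsTree.card_edgeSide_add_card_edgeSide (hT : G.IsTree) (h : G.Adj u v) :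
    #(G.edgeSide u v) + #(G.edgeSide v u) = Fintype.card V := by
  have hvu : G.edgeSide v u = ({x | ¬G.dist x v < G.dist x u} : Finset V) :=
    Finset.filter_congr fun x _ => by have := hT.dist_ne_of_adj x h; omega
  rw [hvu, edgeSide, card_filter_add_card_filter_not, card_univ]

lemma IsTree.card_edgeSide_lt (hT : G.IsTree) (huv : G.Adj u v) (hvw : G.Adj v w)
    (huw : u ≠ w) : #(G.edgeSide v w) < #(G.edgeSide u v) := by
  refine card_lt_card ⟨fun x hx => ?_, fun hsub => ?_⟩
  · simp only [edgeSide, mem_filter, mem_univ, true_and] at hx ⊢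
    have := hT.dist_eq_dist_add_one_of_adj x hvw
    rcases hT.dist_eq_dist_add_one_of_adj x huv with hd | hd
    · omega
    · exact absurd (hT.eq_of_adj_of_dist_add_one huv hvw.symm hd.symm (by omega)) huw
  · have := hsub (x := v) (by simpa [edgeSide] using hT.connected.pos_dist_of_ne huv.ne')
    simp [edgeSide] at this

/-- The far sides shrink strictly along a path leaving `a` (`card_edgeSide_lt`), and by
minimality of `a` the first one holds at most half of the vertices. -/
lemma IsTree.two_mul_card_edgeSide_lt (hT : G.IsTree) {a b c : V}
    (ha : ∀ u, G.distSum a ≤ G.distSum u) (hcb : G.IsChild a c b) (hca : c ≠ a) :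
    2 * #(G.edgeSide c b) < Fintype.card V := by
  induction hn : G.dist a c using Nat.strong_induction_on generalizing b c with
  | _ n ih =>
    obtain ⟨k, hk⟩ := Nat.exists_eq_add_one_of_ne_zero
      (hn ▸ (hT.connected.pos_dist_of_ne hca.symm).ne')
    obtain ⟨c', hc'c, hc'⟩ := exists_isChild_of_dist_eq_add_one (hn.trans hk)
    have hlt := hT.card_edgeSide_lt hc'c.1 hcb.1 (by rintro rfl; have := hcb.2; omega)
    by_cases hc'a : c' = a
    · subst hc'a
      have := ha c
      have := hT.distSum_add_card_edgeSide hc'c.1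
      have := hT.card_edgeSide_add_card_edgeSide hc'c.1
      omega
    · have := ih k (by omega) hc'c hc'a hc'
      omega

lemma IsTree.adj_of_distSum_min (hT : G.IsTree) {a b : V} (ha : ∀ u, G.distSum a ≤ G.distSum u)
    (hb : ∀ u, G.distSum b ≤ G.distSum u) (hab : a ≠ b) : G.Adj a b := by
  by_contra hnadj
  have h2 := hT.connected.one_lt_dist_of_ne_of_not_adj hab hnadj
  obtain ⟨k, hk⟩ := Nat.exists_eq_add_one_of_ne_zero (n := G.dist a b) (by omega)
  obtain ⟨c, hcb, hc⟩ := exists_isChild_of_dist_eq_add_one hk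
  have hca : c ≠ a := by rintro rfl; simp at hc; omega
  have := hT.two_mul_card_edgeSide_lt ha hcb hca
  have := hb c
  have := hT.distSum_add_card_edgeSide hcb.1
  have := hT.card_edgeSide_add_card_edgeSide hcb.1
  omega

/-- Two minimisers of `distSum` would be adjacent, and adjacent vertices have different distances
to the fixed vertex `x`. -/
lemma IsTree.apply_eq_self_of_distSum_min (hT : G.IsTree) {r x : V}
    (hr : ∀ u, G.distSum r ≤ G.distSum u) (φ : G ≃g G) (hx : φ x = x) : φ r = r := by
  by_contra hne
  have hadj := hT.adj_of_distSum_min hr (fun u => φ.distSum_eq r ▸ hr u) (Ne.symm hne)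
  exact hT.dist_ne_of_adj x hadj (by rw [← φ.dist_eq x r, hx])

end Centroid

section Pendant

variable {V : Type*} [Fintype V] {G : SimpleGraph V} {r p b : V}

lemma IsTree.adj_iff_of_card_subtree_eq_one (hT : G.IsTree) (h : G.IsChild r p b)
    (hs : #(G.subtree r b) = 1) (z : V) : G.Adj b z ↔ z = p := by
  rw [hT.adj_iff_of_isChild h, or_iff_left]
  exact fun hz => hz.1.ne (card_le_one.1 hs.le _ (mem_subtree_self r b) _ hz.mem_subtree)

lemma IsTree.exists_adj_iff_of_card_subtree_eq_two (hT : G.IsTree) (h : G.IsChild r p b)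
    (hs : #(G.subtree r b) = 2) :
    ∃ c, (∀ z, G.Adj b z ↔ z = p ∨ z = c) ∧ (∀ z, G.Adj c z ↔ z = b) := by
  obtain ⟨c, hc⟩ := card_eq_one.1 (by rw [card_erase_of_mem (mem_subtree_self r b), hs])
  have hmem : ∀ z, z ∈ G.subtree r b ↔ z = b ∨ z = c := fun z => by
    by_cases hz : z = b
    · simp [hz, mem_subtree_self]
    · simpa [hz] using congrArg (z ∈ ·) hc
  obtain ⟨hcb, hcmem⟩ := mem_erase.1 (hc ▸ mem_singleton_self c)
  have hlt := hT.dist_lt_of_mem_subtree hcmem hcb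
  obtain ⟨k, hk⟩ := Nat.exists_eq_add_one_of_ne_zero (n := G.dist r c) (by omega)
  obtain ⟨q, hqc, -⟩ := exists_isChild_of_dist_eq_add_one hk
  have hbc : G.IsChild r b c := by
    rcases (hmem q).1 (hT.mem_subtree_of_isChild hcmem hcb hqc) with rfl | rfl
    exacts [hqc, (G.irrefl hqc.1).elim]
  refine ⟨c, fun z => ?_, fun z => ?_⟩
  · rw [hT.adj_iff_of_isChild h]
    refine or_congr_right ⟨fun hz => ?_, fun hz => hz ▸ hbc⟩
    exact ((hmem z).1 hz.mem_subtree).resolve_left hz.1.ne'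
  · rw [hT.adj_iff_of_isChild hbc, or_iff_left]
    intro hz
    rcases (hmem z).1 (hT.subtree_subset hcmem hz.mem_subtree) with rfl | rfl
    · have := hz.2; have := hbc.2; omega
    · exact G.irrefl hz.1

variable {α : Type*} [Fintype α] {c : V → α}

/-- Swapping two leaves hanging from `p` is an automorphism, so a distinguishing colouring gives
them different colours. -/
lemma IsTree.card_leaf_children_le (hT : G.IsTree) (hc : IsDistinguishingColoring G c)
    (r p : V) : #{b | G.IsChild r p b ∧ #(G.subtree r b) = 1} ≤ Fintype.card α := by
  refine card_le_card_of_injOn c (fun _ _ => mem_coe.2 (mem_univ _)) fun b₁ hb₁ b₂ hb₂ hcol => ?_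
  obtain ⟨-, hb₁, hs₁⟩ := mem_filter.1 hb₁
  obtain ⟨-, hb₂, hs₂⟩ := mem_filter.1 hb₂
  by_contra hne
  obtain ⟨φ, hφ⟩ := exists_iso_swap_of_adj_iff (G := G) (x := b₁) (y := b₂) fun z => by
    rw [hT.adj_iff_of_card_subtree_eq_one hb₁ hs₁, hT.adj_iff_of_card_subtree_eq_one hb₂ hs₂]
  have := hc φ (fun v => by rw [hφ]; exact congrFun (Equiv.comp_swap_eq_self hcol) v) b₁
  rw [hφ, Equiv.swap_apply_left] at this
  exact hne this.symm

/-- Swapping two pendant edges hanging from `p` is an automorphism, so a distinguishing colouring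
gives them different pairs of colours. -/
lemma IsTree.card_path_children_le (hT : G.IsTree) (hc : IsDistinguishingColoring G c)
    (r p : V) : #{b | G.IsChild r p b ∧ #(G.subtree r b) = 2} ≤ Fintype.card α ^ 2 := by
  have hpath : ∀ b ∈ ({b | G.IsChild r p b ∧ #(G.subtree r b) = 2} : Finset V), ∃ d,
      (∀ z, G.Adj b z ↔ z = p ∨ z = d) ∧ (∀ z, G.Adj d z ↔ z = b) := fun b hb => by
    simp only [mem_filter, mem_univ, true_and] at hb
    exact hT.exists_adj_iff_of_card_subtree_eq_two hb.1 hb.2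
  choose! d hd using hpath
  rw [sq, ← Fintype.card_prod, ← card_univ]
  refine card_le_card_of_injOn (fun b => (c b, c (d b))) (fun _ _ => mem_coe.2 (mem_univ _))
    fun b₁ hb₁ b₂ hb₂ hcol => ?_
  simp only [Prod.mk.injEq] at hcol
  by_contra hne
  obtain ⟨φ, hφ, hφb⟩ := exists_iso_swap_swap hne (hd b₁ hb₁).1 (hd b₂ hb₂).1 (hd b₁ hb₁).2
    (hd b₂ hb₂).2
  have hpres : c ∘ φ = c := by
    rw [hφ, ← Function.comp_assoc, Equiv.comp_swap_eq_self hcol.1, Equiv.comp_swap_eq_self hcol.2]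
  exact hne ((hφb.symm.trans (hc φ (congrFun hpres) b₁)).symm)

end Pendant

section FixingSet

variable {V : Type*} [Fintype V] {G : SimpleGraph V} {r p b x : V}

variable (G) in
/-- A free branch is fixed pointwise by every automorphism fixing `r` and `b`. -/
def IsFree (r b : V) : Prop :=
  ∀ q ∈ G.subtree r b, ∀ c₁ c₂, G.IsChild r q c₁ → G.IsChild r q c₂ → c₁ ≠ c₂ →
    #(G.subtree r c₁) ≠ #(G.subtree r c₂)

variable (G) in
noncomputable def freeChildren (r p : V) : Finset V := {b | G.IsChild r p b ∧ G.IsFree r b}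

lemma mem_freeChildren : b ∈ G.freeChildren r p ↔ G.IsChild r p b ∧ G.IsFree r b := by
  simp [freeChildren]

lemma IsTree.card_subtree_lt (hT : G.IsTree) (hx : x ∈ G.subtree r b) (hne : x ≠ b) :
    #(G.subtree r x) < #(G.subtree r b) := by
  refine card_lt_card ⟨hT.subtree_subset hx, fun h => ?_⟩
  have := hT.dist_lt_of_mem_subtree hx hne
  have := mem_subtree.1 (h (mem_subtree_self r b))
  omega

variable [LinearOrder V]

variable (G) in
noncomputable def markedChildren (r p : V) : Finset V :=
  {b ∈ G.freeChildren r p | ∃ b' ∈ G.freeChildren r p, b' < b ∧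
    #(G.subtree r b') = #(G.subtree r b)}

variable (G) in
noncomputable def rootedFixingSet (r : V) : Finset V := univ.biUnion (G.markedChildren r)

lemma mem_markedChildren : b ∈ G.markedChildren r p ↔ b ∈ G.freeChildren r p ∧
    ∃ b' ∈ G.freeChildren r p, b' < b ∧ #(G.subtree r b') = #(G.subtree r b) := by
  simp [markedChildren]

lemma mem_rootedFixingSet_of_lt {b' : V} (hb : b ∈ G.freeChildren r p)
    (hb' : b' ∈ G.freeChildren r p) (hlt : b' < b) (hs : #(G.subtree r b') = #(G.subtree r b)) :
    b ∈ G.rootedFixingSet r :=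
  mem_biUnion.2 ⟨p, mem_univ p, mem_markedChildren.2 ⟨hb, b', hb', hlt, hs⟩⟩

lemma mem_rootedFixingSet_or_mem {b' : V} (hb : b ∈ G.freeChildren r p)
    (hb' : b' ∈ G.freeChildren r p) (hne : b ≠ b') (hs : #(G.subtree r b) = #(G.subtree r b')) :
    b ∈ G.rootedFixingSet r ∨ b' ∈ G.rootedFixingSet r := by
  rcases hne.lt_or_gt with hlt | hlt
  exacts [.inr (mem_rootedFixingSet_of_lt hb' hb hlt hs),
    .inl (mem_rootedFixingSet_of_lt hb hb' hlt hs.symm)]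

lemma IsTree.exists_mem_rootedFixingSet_of_not_isFree (hT : G.IsTree) (hb : ¬G.IsFree r b) :
    ∃ x ∈ G.rootedFixingSet r, x ∈ G.subtree r b := by
  induction hn : #(G.subtree r b) using Nat.strong_induction_on generalizing b with
  | _ n ih =>
    obtain ⟨q, hq, c₁, c₂, h₁, h₂, hne, hsize⟩ : ∃ q ∈ G.subtree r b, ∃ c₁ c₂,
        G.IsChild r q c₁ ∧ G.IsChild r q c₂ ∧ c₁ ≠ c₂ ∧ #(G.subtree r c₁) = #(G.subtree r c₂) := by
      simpa [IsFree] using hb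
    have hcb : ∀ {c}, G.IsChild r q c → c ∈ G.subtree r b := fun hc =>
      hT.subtree_subset hq hc.mem_subtree
    have descend : ∀ c, G.IsChild r q c → ¬G.IsFree r c → ∃ x ∈ G.rootedFixingSet r,
        x ∈ G.subtree r b := fun c hc hcf => by
      have hne : c ≠ b := by
        rintro rfl; have := hc.2; have := mem_subtree.1 hq; omega
      obtain ⟨x, hx, hxc⟩ := ih _ (hn ▸ hT.card_subtree_lt (hcb hc) hne) hcf rfl
      exact ⟨x, hx, hT.subtree_subset (hcb hc) hxc⟩
    by_cases hf₁ : G.IsFree r c₁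
    · by_cases hf₂ : G.IsFree r c₂
      · rcases mem_rootedFixingSet_or_mem (mem_freeChildren.2 ⟨h₁, hf₁⟩)
          (mem_freeChildren.2 ⟨h₂, hf₂⟩) hne hsize with h | h
        exacts [⟨c₁, h, hcb h₁⟩, ⟨c₂, h, hcb h₂⟩]
      · exact descend c₂ h₂ hf₂
    · exact descend c₁ h₁ hf₁

lemma IsTree.apply_eq_self_of_not_isFree (hT : G.IsTree) {φ : G ≃g G} (hr : φ r = r)
    (hfix : ∀ x ∈ G.rootedFixingSet r, φ x = x) (hb : ¬G.IsFree r b) : φ b = b := by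
  obtain ⟨x, hx, hxb⟩ := hT.exists_mem_rootedFixingSet_of_not_isFree hb
  have hxφb : x ∈ G.subtree r (φ b) := by
    simpa [hr, hfix x hx] using (φ.apply_mem_subtree_iff (r := r) (b := b)).2 hxb
  exact hT.eq_of_mem_subtree_of_dist_eq hxφb hxb (by rw [← φ.dist_eq r b, hr])

lemma IsTree.apply_eq_self_of_isChild (hT : G.IsTree) {φ : G ≃g G} (hr : φ r = r)
    (hfix : ∀ x ∈ G.rootedFixingSet r, φ x = x) (hpb : G.IsChild r p b) (hp : φ p = p) :
    φ b = b := by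
  by_contra hne
  have hfree : ∀ v, φ v ≠ v → G.IsFree r v := fun v hv =>
    by_contra fun h => hv (hT.apply_eq_self_of_not_isFree hr hfix h)
  have hb := mem_freeChildren.2 ⟨hpb, hfree b hne⟩
  have hφb := mem_freeChildren.2 ⟨by simpa [hr, hp] using hpb.map φ,
    hfree (φ b) fun h => hne (φ.injective h)⟩
  have hs : #(G.subtree r b) = #(G.subtree r (φ b)) := by
    simpa [hr] using (φ.card_subtree r b).symm
  rcases mem_rootedFixingSet_or_mem hb hφb (Ne.symm hne) hs with h | h
  exacts [hne (hfix b h), hne (φ.injective (hfix _ h))]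

lemma IsTree.isFixingSet_insert_root (hT : G.IsTree) (r : V) :
    IsFixingSet G ↑(insert r (G.rootedFixingSet r)) := by
  intro φ hφ v
  have hr : φ r = r := hφ r (by simp)
  have hfix : ∀ x ∈ G.rootedFixingSet r, φ x = x := fun x hx => hφ x (by simp [hx])
  induction hn : G.dist r v generalizing v with
  | zero => rwa [← hT.connected.dist_eq_zero_iff.1 hn]
  | succ k ih =>
    obtain ⟨p, hpv, hp⟩ := exists_isChild_of_dist_eq_add_one hn
    exact hT.apply_eq_self_of_isChild hr hfix hpv (ih p hp)

end FixingSet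

section Counting

variable {V : Type*} [Fintype V] [LinearOrder V] {G : SimpleGraph V} {r p p' b b' : V}
  {c : V → Fin 2}

variable (G) in
/-- The vertices whose weight pays for the marked children of `p`. -/
noncomputable def territory (r p : V) : Finset V :=
  insert p ((G.freeChildren r p).biUnion (G.subtree r))

lemma markedChildren_subset_freeChildren : G.markedChildren r p ⊆ G.freeChildren r p :=
  filter_subset _ _

lemma IsTree.card_territory (hT : G.IsTree) (r p : V) :
    #(G.territory r p) = ∑ b ∈ G.freeChildren r p, #(G.subtree r b) + 1 := by
  rw [territory, card_insert_of_notMem, card_biUnion]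
  · intro b hb b' hb' hne
    rw [mem_coe, mem_freeChildren] at hb hb'
    exact hT.disjoint_subtree (by rw [hb.1.2, hb'.1.2]) hne
  · simp only [mem_biUnion, not_exists, not_and]
    intro b hb hpb
    have := (mem_freeChildren.1 hb).1.2
    have := hT.dist_lt_of_mem_subtree hpb (mem_freeChildren.1 hb).1.1.ne
    omega

lemma notMem_subtree_of_isFree (hp : (G.markedChildren r p).Nonempty) (hb : G.IsFree r b) :
    p ∉ G.subtree r b := fun hpb => by
  obtain ⟨m, hm⟩ := hp
  obtain ⟨hmF, m', hm'F, hlt, hs⟩ := mem_markedChildren.1 hm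
  exact hb p hpb m' m (mem_freeChildren.1 hm'F).1 (mem_freeChildren.1 hmF).1 hlt.ne hs

lemma IsTree.disjoint_subtree_of_mem_freeChildren (hT : G.IsTree)
    (hp' : (G.markedChildren r p').Nonempty) (hb : b ∈ G.freeChildren r p)
    (hb' : b' ∈ G.freeChildren r p') (hne : p ≠ p') (hd : G.dist r b ≤ G.dist r b') :
    Disjoint (G.subtree r b) (G.subtree r b') := by
  rw [mem_freeChildren] at hb hb'
  refine Finset.disjoint_left.2 fun x hx hx' => ?_
  have hb'b := hT.mem_subtree_of_dist_le hx hx' hd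
  have hb'ne : b' ≠ b := by rintro rfl; exact hne (hT.isChild_unique hb.1 hb'.1)
  exact notMem_subtree_of_isFree hp' hb.2 (hT.mem_subtree_of_isChild hb'b hb'ne hb'.1)

lemma IsTree.disjoint_territory (hT : G.IsTree) (hp : (G.markedChildren r p).Nonempty)
    (hp' : (G.markedChildren r p').Nonempty) (hne : p ≠ p') :
    Disjoint (G.territory r p) (G.territory r p') := by
  simp only [territory, disjoint_insert_left, disjoint_insert_right, mem_insert, mem_biUnion,
    disjoint_biUnion_left, disjoint_biUnion_right, not_or, not_exists, not_and]
  refine ⟨⟨hne.symm, fun b hb => notMem_subtree_of_isFree hp' (mem_freeChildren.1 hb).2⟩,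
    fun b' hb' => ⟨notMem_subtree_of_isFree hp (mem_freeChildren.1 hb').2, fun b hb => ?_⟩⟩
  rcases le_total (G.dist r b) (G.dist r b') with hd | hd
  · exact hT.disjoint_subtree_of_mem_freeChildren hp' hb hb' hne hd
  · exact (hT.disjoint_subtree_of_mem_freeChildren hp hb' hb hne.symm hd).symm

/-- Within a class of free children of equal branch size, the least one is not marked. -/
lemma card_filter_markedChildren_lt (s : ℕ)
    (h : {b ∈ G.freeChildren r p | b ∈ G.markedChildren r p ∧ #(G.subtree r b) = s}.Nonempty) :
    #{b ∈ G.freeChildren r p | b ∈ G.markedChildren r p ∧ #(G.subtree r b) = s} <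
      #{b ∈ G.freeChildren r p | #(G.subtree r b) = s} := by
  set S := {b ∈ G.freeChildren r p | b ∈ G.markedChildren r p ∧ #(G.subtree r b) = s}
  obtain ⟨-, hmM, hms⟩ := mem_filter.1 (S.min'_mem h)
  obtain ⟨-, m', hm'F, hlt, hs⟩ := mem_markedChildren.1 hmM
  refine card_lt_card ⟨fun b hb => ?_, fun hsub => ?_⟩
  · obtain ⟨hbF, -, hbs⟩ := mem_filter.1 hb
    exact mem_filter.2 ⟨hbF, hbs⟩
  · exact (S.min'_le m' (hsub (mem_filter.2 ⟨hm'F, hs.trans hms⟩))).not_gt hlt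

/-- Among the free children of `p` at most two are leaves and at most four are pendant edges, and
all but one child of each branch size is marked: `11 (k - 1) ≤ 4 k + 3` for `k ≤ 2` leaves and
`11 (k - 1) ≤ 8 k + 1` for `k ≤ 4` pendant edges, where the spare `4` is paid by `p` itself, and
every larger marked child pays for itself with at least `3` vertices. -/
lemma IsTree.eleven_mul_card_markedChildren_le (hT : G.IsTree) (hc : IsDistinguishingColoring G c)
    (r p : V) : 11 * #(G.markedChildren r p) ≤ 4 * #(G.territory r p) := by
  have hterr := hT.card_territory r p
  have hMF : #(G.markedChildren r p) = #{b ∈ G.freeChildren r p | b ∈ G.markedChildren r p} := by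
    rw [filter_mem_eq_inter, inter_eq_right.2 markedChildren_subset_freeChildren]
  set F := G.freeChildren r p
  set M := G.markedChildren r p
  have hF : ∀ s, #{b ∈ F | #(G.subtree r b) = s} ≤ #{b | G.IsChild r p b ∧ #(G.subtree r b) = s} :=
    fun s => card_le_card fun b hb => by
      obtain ⟨hbF, hbs⟩ := mem_filter.1 hb
      exact mem_filter.2 ⟨mem_univ b, (mem_freeChildren.1 hbF).1, hbs⟩
  have hF₁ := (hF 1).trans (hT.card_leaf_children_le hc r p)
  have hF₂ := (hF 2).trans (hT.card_path_children_le hc r p)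
  have hM : ∀ s, #{b ∈ F | b ∈ M ∧ #(G.subtree r b) = s} = 0 ∨
      #{b ∈ F | b ∈ M ∧ #(G.subtree r b) = s} < #{b ∈ F | #(G.subtree r b) = s} := fun s =>
    (eq_empty_or_nonempty _).imp card_eq_zero.2 (card_filter_markedChildren_lt s)
  have hcount : 11 * #M + 4 * #{b ∈ F | #(G.subtree r b) = 1} + 8 * #{b ∈ F | #(G.subtree r b) = 2}
      ≤ 4 * ∑ b ∈ F, #(G.subtree r b) + 11 * #{b ∈ F | b ∈ M ∧ #(G.subtree r b) = 1}
        + 11 * #{b ∈ F | b ∈ M ∧ #(G.subtree r b) = 2} := by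
    rw [hMF]
    simp only [card_filter, mul_sum, ← sum_add_distrib]
    refine sum_le_sum fun b _ => ?_
    have := one_le_card_subtree (G := G) r b
    split_ifs <;> grind
  simp only [Fintype.card_fin] at hF₁ hF₂
  rcases hM 1 with h₁ | h₁ <;> rcases hM 2 with h₂ | h₂ <;> omega

lemma IsTree.eleven_mul_card_rootedFixingSet_le (hT : G.IsTree)
    (hc : IsDistinguishingColoring G c) (r : V) :
    11 * #(G.rootedFixingSet r) ≤ 4 * Fintype.card V := by
  set P : Finset V := {p | (G.markedChildren r p).Nonempty}
  have hsum : ∑ p ∈ P, #(G.markedChildren r p) = ∑ p, #(G.markedChildren r p) :=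
    sum_filter_of_ne fun p _ h => card_ne_zero.1 h
  have hdisj : (P : Set V).PairwiseDisjoint (G.territory r) := fun p hp p' hp' hne =>
    hT.disjoint_territory (mem_filter.1 hp).2 (mem_filter.1 hp').2 hne
  calc 11 * #(G.rootedFixingSet r) ≤ 11 * ∑ p, #(G.markedChildren r p) :=
        Nat.mul_le_mul_left 11 card_biUnion_le
    _ = ∑ p ∈ P, 11 * #(G.markedChildren r p) := by rw [← hsum, mul_sum]
    _ ≤ ∑ p ∈ P, 4 * #(G.territory r p) :=
        sum_le_sum fun p _ => hT.eleven_mul_card_markedChildren_le hc r p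
    _ = 4 * #(P.biUnion (G.territory r)) := by rw [card_biUnion hdisj, mul_sum]
    _ ≤ 4 * Fintype.card V := Nat.mul_le_mul_left 4 (card_le_univ _)

end Counting

end SimpleGraph

lemma fixingNumber_le_card {V : Type*} [Fintype V] {G : SimpleGraph V} {S : Finset V}
    (hS : IsFixingSet G ↑S) : fixingNumber G ≤ #S :=
  Nat.sInf_le ⟨S, rfl, hS⟩

theorem tree_fixing_density_le
    {V : Type*} [Fintype V] (G : SimpleGraph V)
    (hT : G.IsTree) (hn : 3 ≤ Fintype.card V)
    (h2 : Distinguishable G 2) :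
    (fixingNumber G : ℚ) ≤ 4 * Fintype.card V / 11 := by
  obtain ⟨c, hc⟩ := h2
  let : LinearOrder V := LinearOrder.lift' _ (Fintype.equivFin V).injective
  obtain ⟨r, -, hr⟩ := exists_min_image univ G.distSum (univ_nonempty_iff.2 hT.connected.nonempty)
  have hfix := hT.isFixingSet_insert_root r
  have hcard : 11 * fixingNumber G ≤ 4 * Fintype.card V := by
    by_cases hS : (G.rootedFixingSet r).Nonempty
    · refine (Nat.mul_le_mul_left 11 (fixingNumber_le_card fun φ hφ => hfix φ ?_)).trans
        (hT.eleven_mul_card_rootedFixingSet_le hc r)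
      obtain ⟨x, hx⟩ := hS
      have hφr := hT.apply_eq_self_of_distSum_min (fun u => hr u (mem_univ u)) φ (hφ x hx)
      simpa [hφr] using hφ
    · rw [not_nonempty_iff_eq_empty.1 hS, insert_empty] at hfix
      have := fixingNumber_le_card hfix
      rw [card_singleton] at this
      omega
  have : (11 : ℚ) * fixingNumber G ≤ 4 * Fintype.card V := by exact_mod_cast hcard
  linarith
end

section
/- If T is a tree with distinguishing number D(T) = D ≥ 3 and order n, then F(T) ≤ ((D-1)/(D+1))·n. -/
open SimpleGraph

/-!
Every automorphism of a tree preserves its centroid, a vertex or an edge, so it suffices to pin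
down the branches hanging from the centroid; this is done bottom-up within a budget of
`(D - 1) / (D + 1)` per vertex. At a vertex `r` whose child branches are pinned down once their
roots are fixed, give every child a nonempty pinning set inside its branch (the child itself if
need be, costing `D + 1 ≤ 2 (D - 1)` once the branch has two vertices). A fixed vertex inside a
branch fixes the child it hangs from, and an automorphism fixing `r` permutes the children, so
one child may be left out: a leaf, if there is one. Each leaf child overdraws its budget by `2`,
but two leaves at `r` are swapped by an automorphism, so a distinguishing colouring gives them
distinct colours and there are at most `D` of them; the `D + 1` saved by leaving one out and the
budget `D - 1` of `r` cover the overdraft.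
-/

open Finset

lemma Function.Injective.forall_apply_eq_self_of_mapsTo {α : Type*} {f : α → α}
    (hf : f.Injective) {s : Set α} (hs : Set.MapsTo f s s) {a : α}
    (h : ∀ x ∈ s, x ≠ a → f x = x) : ∀ x ∈ s, f x = x := by
  intro x hx
  obtain rfl | hxa := eq_or_ne x a
  · by_contra hne
    exact hne (hf (h (f x) (hs hx) hne))
  · exact h x hx hxa

lemma Finset.exists_nonempty_superset_card_le {α : Type*} {U A : Finset α} {a : α}
    (hU : U ⊆ A) (ha : a ∈ A) : ∃ T, U ⊆ T ∧ T ⊆ A ∧ T.Nonempty ∧ #T ≤ max #U 1 := by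
  rcases U.eq_empty_or_nonempty with rfl | hne
  · exact ⟨{a}, empty_subset _, singleton_subset_iff.2 ha, singleton_nonempty a, by simp⟩
  · exact ⟨U, subset_rfl, hU, hne, le_max_left _ _⟩

lemma add_one_le_sub_one_mul {D k : ℕ} (hD : 3 ≤ D) (hk : 2 ≤ k) : D + 1 ≤ (D - 1) * k :=
  calc D + 1 ≤ (D - 1) * 2 := by omega
    _ ≤ (D - 1) * k := Nat.mul_le_mul_left _ hk

-- The count at a vertex with children `X`: `b x` is the size of the branch of `x`, the leaves are
-- the children with `b x = 1`, and `x₀` is the child left out.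
lemma mul_card_biUnion_erase_le {ι α : Type*} [DecidableEq ι] [DecidableEq α] {D : ℕ}
    {X : Finset ι} {T : ι → Finset α} {b : ι → ℕ} {x₀ : ι}
    (hleaves : #{x ∈ X | b x = 1} ≤ D) (hleaf : ∀ x ∈ X, b x = 1 → #(T x) ≤ 1)
    (hcost : ∀ x ∈ X, b x ≠ 1 → (D + 1) * #(T x) ≤ (D - 1) * b x)
    (hx₀ : x₀ ∈ {x ∈ X | b x = 1} ∨ {x ∈ X | b x = 1} = ∅) :
    (D + 1) * #((X.erase x₀).biUnion T) ≤ (D - 1) * (1 + ∑ x ∈ X, b x) := by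
  have hbound : ∀ x ∈ X, (D + 1) * #(T x) ≤ (D - 1) * b x + if b x = 1 then 2 else 0 := by
    intro x hx
    split_ifs with hb
    · have := Nat.mul_le_mul_left (D + 1) (hleaf x hx hb)
      rw [hb]
      omega
    · simpa using hcost x hx hb
  calc (D + 1) * #((X.erase x₀).biUnion T)
      ≤ ∑ x ∈ X.erase x₀, (D + 1) * #(T x) := by
        rw [← mul_sum]
        exact Nat.mul_le_mul_left _ card_biUnion_le
    _ ≤ ∑ x ∈ X.erase x₀, ((D - 1) * b x + if b x = 1 then 2 else 0) :=
        sum_le_sum fun x hx => hbound x (mem_of_mem_erase hx)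
    _ = (D - 1) * ∑ x ∈ X.erase x₀, b x + 2 * #{x ∈ X.erase x₀ | b x = 1} := by
        rw [sum_add_distrib, ← mul_sum, ← sum_filter, sum_const, smul_eq_mul, mul_comm 2]
    _ ≤ (D - 1) * (1 + ∑ x ∈ X, b x) := by
        rcases hx₀ with hx₀ | hnone
        · obtain ⟨hx₀X, hb⟩ := mem_filter.1 hx₀
          rw [← add_sum_erase X b hx₀X, hb, filter_erase, card_erase_of_mem hx₀]
          rw [mul_add, mul_add]
          omega
        · rw [filter_erase, hnone, erase_empty, card_empty, mul_zero, add_zero]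
          exact Nat.mul_le_mul_left _ ((sum_le_sum_of_subset (erase_subset _ _)).trans
            (Nat.le_add_left _ _))

namespace SimpleGraph

variable {V : Type*} {G : SimpleGraph V}

def PendantBounded (G : SimpleGraph V) (D : ℕ) : Prop :=
  ∀ (r : V) (L : Finset V), (∀ x ∈ L, G.neighborSet x = {r}) → #L ≤ D

section Twins

variable {x x' : V}

lemma adj_swap_left_iff [DecidableEq V] (h : G.neighborSet x = G.neighborSet x') (a b : V) :
    G.Adj (Equiv.swap x x' a) b ↔ G.Adj a b := by
  rw [Equiv.swap_apply_def]
  split_ifs with hx hx'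
  · subst hx
    exact (Set.ext_iff.1 h b).symm
  · subst hx'
    exact Set.ext_iff.1 h b
  · rfl

def Iso.swapOfNeighborSetEq [DecidableEq V] (h : G.neighborSet x = G.neighborSet x') :
    G ≃g G where
  toEquiv := Equiv.swap x x'
  map_rel_iff' {a b} := by
    rw [adj_swap_left_iff h, G.adj_comm, adj_swap_left_iff h, G.adj_comm]

lemma _root_.IsDistinguishingColoring.eq_of_neighborSet_eq {α : Type*} {c : V → α}
    (hc : IsDistinguishingColoring G c) (h : G.neighborSet x = G.neighborSet x')
    (hcx : c x = c x') : x = x' := by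
  classical
  have hfix := hc (Iso.swapOfNeighborSetEq h) (fun v => by
    change c (Equiv.swap x x' v) = c v
    rw [Equiv.swap_apply_def]
    split_ifs with h₁ h₂
    · rw [h₁, hcx]
    · rw [h₂, hcx]
    · rfl) x
  change Equiv.swap x x' x = x at hfix
  rw [Equiv.swap_apply_left] at hfix
  exact hfix.symm

lemma _root_.IsDistinguishingColoring.pendantBounded {α : Type*} [Fintype α] {c : V → α}
    (hc : IsDistinguishingColoring G c) : G.PendantBounded (Fintype.card α) := fun _ L hL =>
  calc #L ≤ #(univ : Finset α) :=
        card_le_card_of_injOn c (fun _ _ => mem_coe.2 (mem_univ _)) fun x hx x' hx' hcx =>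
          hc.eq_of_neighborSet_eq ((hL x hx).trans (hL x' hx').symm) hcx
    _ = Fintype.card α := card_univ

end Twins

def branch (G : SimpleGraph V) (r u : V) : Set V :=
  {v | (G.deleteIncidenceSet r).Reachable u v}

section Branch

variable {r u v : V}

lemma mem_branch_self (r u : V) : u ∈ G.branch r u := Reachable.refl u

lemma branch_eq_of_mem (h : v ∈ G.branch r u) : G.branch r v = G.branch r u := by
  ext w
  exact ⟨h.trans, h.symm.trans⟩

lemma mem_branch_of_adj (h : G.Adj u v) (hu : u ≠ r) (hv : v ≠ r) : v ∈ G.branch r u :=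
  (deleteIncidenceSet_adj.2 ⟨h, hu, hv⟩).reachable

lemma ne_of_mem_branch (hu : u ≠ r) (h : v ∈ G.branch r u) : v ≠ r := by
  obtain ⟨p⟩ := h
  induction p with
  | nil => exact hu
  | cons h _ ih => exact ih (deleteIncidenceSet_adj.1 h).2.2

lemma notMem_branch_of_ne (hu : u ≠ r) : r ∉ G.branch r u :=
  fun h => ne_of_mem_branch hu h rfl

lemma reachable_deleteEdges_of_mem_branch (x : V) (h : v ∈ G.branch r u) :
    (G.deleteEdges {s(r, x)}).Reachable u v :=
  h.mono fun a b hab => by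
    obtain ⟨hab, ha, hb⟩ := deleteIncidenceSet_adj.1 hab
    refine deleteEdges_adj.2 ⟨hab, ?_⟩
    simp [ha, hb]

lemma Iso.map_mem_branch {V' : Type*} {G' : SimpleGraph V'} (φ : G ≃g G')
    (h : v ∈ G.branch r u) : φ v ∈ G'.branch (φ r) (φ u) :=
  h.map ⟨φ, fun hab => by
    obtain ⟨hab, ha, hb⟩ := deleteIncidenceSet_adj.1 hab
    exact deleteIncidenceSet_adj.2 ⟨φ.map_adj_iff.2 hab, φ.injective.ne ha, φ.injective.ne hb⟩⟩

lemma Iso.map_mem_branch_iff {V' : Type*} {G' : SimpleGraph V'} (φ : G ≃g G') :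
    φ v ∈ G'.branch (φ r) (φ u) ↔ v ∈ G.branch r u :=
  ⟨fun h => by simpa using φ.symm.map_mem_branch h, φ.map_mem_branch⟩

lemma Reachable.exists_adj_mem_branch (h : G.Reachable v r) (hv : v ≠ r) :
    ∃ u, G.Adj r u ∧ v ∈ G.branch r u := by
  obtain ⟨p⟩ := h
  induction p with
  | nil => exact absurd rfl hv
  | @cons v w r hvw _ ih =>
    obtain rfl | hw := eq_or_ne w r
    · exact ⟨v, hvw.symm, mem_branch_self _ _⟩
    · obtain ⟨u, hu, hwu⟩ := ih hw
      exact ⟨u, hu, hwu.trans (mem_branch_of_adj hvw.symm hw hv)⟩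

lemma Reachable.mem_branch_or_mem_branch {a b : V} (h : G.Reachable v b) (hab : a ≠ b) :
    v ∈ G.branch a b ∨ v ∈ G.branch b a := by
  obtain ⟨p⟩ := h
  induction p with
  | nil => exact .inl (mem_branch_self _ _)
  | @cons v w b hvw _ ih =>
    rcases ih hab with hw | hw
    · obtain rfl | hv := eq_or_ne v a
      · exact .inr (mem_branch_self _ _)
      · exact .inl (hw.trans (mem_branch_of_adj hvw.symm (ne_of_mem_branch hab.symm hw) hv))
    · obtain rfl | hv := eq_or_ne v b
      · exact .inl (mem_branch_self _ _)
      · exact .inr (hw.trans (mem_branch_of_adj hvw.symm (ne_of_mem_branch hab hw) hv))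

lemma Connected.branch_subset_branch (hG : G.Connected) {p y : V} (hpr : p ≠ r)
    (hp : p ∉ G.branch r y) : G.branch r y ⊆ G.branch p r := by
  intro v hv
  refine ((hG v r).mem_branch_or_mem_branch hpr).resolve_right fun hvp => hp ?_
  rw [← branch_eq_of_mem hv, branch_eq_of_mem hvp]
  exact mem_branch_self r p

lemma IsAcyclic.eq_of_adj_of_mem_branch (hG : G.IsAcyclic) {u' : V} (hu : G.Adj r u)
    (hu' : G.Adj r u') (h : u' ∈ G.branch r u) : u' = u := by
  by_contra hne
  refine isBridge_iff.1 (isAcyclic_iff_forall_adj_isBridge.1 hG hu) ?_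
  have hu'r : (G.deleteEdges {s(r, u)}).Adj u' r :=
    deleteEdges_adj.2 ⟨hu'.symm, by simp [hne, hu.ne]⟩
  exact ((reachable_deleteEdges_of_mem_branch u h).trans hu'r.reachable).symm

lemma IsAcyclic.disjoint_branch (hG : G.IsAcyclic) {x y : V} (hx : G.Adj r x) (hy : G.Adj r y)
    (hxy : x ≠ y) : Disjoint (G.branch r x) (G.branch r y) :=
  Set.disjoint_left.2 fun _ hvx hvy =>
    hxy (hG.eq_of_adj_of_mem_branch hy hx (hvy.trans hvx.symm))

lemma IsAcyclic.disjoint_branch_branch (hG : G.IsAcyclic) {a b : V} (hab : G.Adj a b) :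
    Disjoint (G.branch a b) (G.branch b a) :=
  Set.disjoint_left.2 fun _ hb ha => by
    have hav := reachable_deleteEdges_of_mem_branch a ha
    rw [Sym2.eq_swap] at hav
    exact isBridge_iff.1 (isAcyclic_iff_forall_adj_isBridge.1 hG hab)
      (hav.trans (reachable_deleteEdges_of_mem_branch b hb).symm)

end Branch

def IsBranchFixingSet (G : SimpleGraph V) (r u : V) (S : Set V) : Prop :=
  ∀ φ : G ≃g G, φ r = r → φ u = u → (∀ v ∈ S, φ v = v) → ∀ v ∈ G.branch r u, φ v = v

lemma IsBranchFixingSet.mono {r u : V} {S T : Set V} (h : G.IsBranchFixingSet r u S)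
    (hST : S ⊆ T) : G.IsBranchFixingSet r u T :=
  fun φ hr hu hT => h φ hr hu fun v hv => hT v (hST hv)

lemma IsAcyclic.apply_eq_of_mem_branch (hG : G.IsAcyclic) (φ : G ≃g G) {r x v : V}
    (hr : φ r = r) (hx : G.Adj r x) (hv : v ∈ G.branch r x) (hφv : φ v = v) : φ x = x := by
  have hφx : G.Adj r (φ x) := by simpa [hr] using φ.map_adj_iff.2 hx
  have hvφx : v ∈ G.branch r (φ x) := by simpa [hr, hφv] using φ.map_mem_branch hv
  refine hG.eq_of_adj_of_mem_branch hx hφx ?_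
  rw [← branch_eq_of_mem hv, branch_eq_of_mem hvφx]
  exact mem_branch_self r (φ x)

lemma IsAcyclic.apply_ne_of_mem_branch (hG : G.IsAcyclic) {a b v : V} (hab : G.Adj a b)
    (φ : G ≃g G) (ha : φ a = b) (hb : φ b = a) (hv : v ∈ G.branch a b) : φ v ≠ v := by
  intro hφv
  have hφ := φ.map_mem_branch hv
  rw [ha, hb, hφv] at hφ
  exact Set.disjoint_left.1 (hG.disjoint_branch_branch hab) hv hφ

section Finite

variable [Fintype V] {D : ℕ}

noncomputable def branchFinset (G : SimpleGraph V) (r u : V) : Finset V :=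
  (Set.toFinite (G.branch r u)).toFinset

@[simp]
lemma mem_branchFinset {r u v : V} : v ∈ G.branchFinset r u ↔ v ∈ G.branch r u :=
  Set.Finite.mem_toFinset _

@[simp]
lemma coe_branchFinset {r u : V} : (G.branchFinset r u : Set V) = G.branch r u :=
  Set.Finite.coe_toFinset _

lemma card_branchFinset_map (φ : G ≃g G) (r u : V) :
    #(G.branchFinset (φ r) (φ u)) = #(G.branchFinset r u) := by
  classical
  have himage : G.branchFinset (φ r) (φ u) = (G.branchFinset r u).image φ := by
    ext v
    obtain ⟨w, rfl⟩ := φ.surjective v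
    rw [φ.injective.mem_finset_image, mem_branchFinset, mem_branchFinset, φ.map_mem_branch_iff]
  rw [himage, card_image_of_injective _ φ.injective]

lemma neighborSet_eq_singleton_of_card_branchFinset_eq_one {r x : V} (hrx : G.Adj r x)
    (h : #(G.branchFinset r x) = 1) : G.neighborSet x = {r} := by
  ext y
  refine ⟨fun hxy => ?_, fun hy => hy ▸ hrx.symm⟩
  by_contra hyr
  have hy : y ∈ G.branchFinset r x := mem_branchFinset.2 (mem_branch_of_adj hxy hrx.ne' hyr)
  have hx : x ∈ G.branchFinset r x := mem_branchFinset.2 (mem_branch_self r x)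
  exact G.irrefl (card_le_one.1 h.le y hy x hx ▸ hxy)

lemma IsAcyclic.card_insert_biUnion_branchFinset [DecidableEq V] (hG : G.IsAcyclic) {r : V}
    {X : Finset V} (hX : ∀ x ∈ X, G.Adj r x) :
    #(insert r (X.biUnion (G.branchFinset r))) = 1 + ∑ x ∈ X, #(G.branchFinset r x) := by
  rw [card_insert_of_notMem, card_biUnion, add_comm]
  · intro x hx y hy hxy
    rw [Function.onFun, ← disjoint_coe, coe_branchFinset, coe_branchFinset]
    exact hG.disjoint_branch (hX x hx) (hX y hy) hxy
  · simp only [mem_biUnion, mem_branchFinset, not_exists, not_and]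
    exact fun x hx => notMem_branch_of_ne (hX x hx).ne'

lemma exists_nonempty_branchFixingSet (hD : 3 ≤ D) {r x : V} {S : Finset V}
    (hSB : S ⊆ G.branchFinset r x) (hSfix : G.IsBranchFixingSet r x S)
    (hScost : (D + 1) * #S ≤ (D - 1) * #(G.branchFinset r x)) :
    ∃ T ⊆ G.branchFinset r x, T.Nonempty ∧ G.IsBranchFixingSet r x T ∧
      (#(G.branchFinset r x) ≠ 1 → (D + 1) * #T ≤ (D - 1) * #(G.branchFinset r x)) := by
  have hx : x ∈ G.branchFinset r x := mem_branchFinset.2 (mem_branch_self r x)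
  obtain ⟨T, hST, hTB, hTne, hTcard⟩ := exists_nonempty_superset_card_le hSB hx
  refine ⟨T, hTB, hTne, hSfix.mono (coe_subset.2 hST), fun hB => ?_⟩
  have hB2 : 2 ≤ #(G.branchFinset r x) := by
    have := card_pos.2 ⟨x, hx⟩
    omega
  calc (D + 1) * #T ≤ (D + 1) * max #S 1 := Nat.mul_le_mul_left _ hTcard
    _ = max ((D + 1) * #S) ((D + 1) * 1) := mul_max _ _ _
    _ ≤ (D - 1) * #(G.branchFinset r x) :=
        max_le hScost (by simpa using add_one_le_sub_one_mul hD hB2)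

theorem IsAcyclic.exists_fixingSet_of_branchFixingSets [DecidableEq V] (hG : G.IsAcyclic)
    (hD : 3 ≤ D) (hpend : G.PendantBounded D) {r : V} {X : Finset V} (hX : ∀ x ∈ X, G.Adj r x)
    (hchild : ∀ x ∈ X, ∃ S ⊆ G.branchFinset r x, G.IsBranchFixingSet r x S ∧
      (D + 1) * #S ≤ (D - 1) * #(G.branchFinset r x)) :
    ∃ S ⊆ X.biUnion (G.branchFinset r),
      (∀ φ : G ≃g G, φ r = r → Set.MapsTo φ X X → (∀ v ∈ S, φ v = v) →
        ∀ x ∈ X, ∀ v ∈ G.branch r x, φ v = v) ∧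
      (D + 1) * #S ≤ (D - 1) * #(insert r (X.biUnion (G.branchFinset r))) := by
  have hT : ∀ x ∈ X, ∃ T ⊆ G.branchFinset r x, T.Nonempty ∧ G.IsBranchFixingSet r x T ∧
      (#(G.branchFinset r x) ≠ 1 → (D + 1) * #T ≤ (D - 1) * #(G.branchFinset r x)) := by
    intro x hx
    obtain ⟨S, hSB, hSfix, hScost⟩ := hchild x hx
    exact exists_nonempty_branchFixingSet hD hSB hSfix hScost
  choose! T hTB hTne hTfix hTcost using hT
  set L := {x ∈ X | #(G.branchFinset r x) = 1}
  have hleaf : ∀ x ∈ L, ∀ v ∈ G.branch r x, v = x := fun x hx v hv =>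
    card_le_one.1 (mem_filter.1 hx).2.le v (mem_branchFinset.2 hv) x
      (mem_branchFinset.2 (mem_branch_self r x))
  -- the child left out: a leaf if there is one, otherwise `r`, which is no child
  obtain ⟨x₀, hx₀, hx₀X⟩ : ∃ x₀, (x₀ ∈ L ∨ L = ∅) ∧ (x₀ ∈ X → x₀ ∈ L) := by
    rcases L.eq_empty_or_nonempty with hL | ⟨y, hy⟩
    · exact ⟨r, .inr hL, fun hr => absurd (hX r hr) G.irrefl⟩
    · exact ⟨y, .inl hy, fun _ => hy⟩
  refine ⟨(X.erase x₀).biUnion T, biUnion_subset.2 fun x hx => ?_, ?_, ?_⟩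
  · exact (hTB x (mem_of_mem_erase hx)).trans (subset_biUnion_of_mem _ (mem_of_mem_erase hx))
  · intro φ hr hφX hS
    have hfixX : ∀ x ∈ X, φ x = x := by
      refine φ.injective.forall_apply_eq_self_of_mapsTo hφX (a := x₀) fun x hx hxx₀ => ?_
      obtain ⟨t, ht⟩ := hTne x hx
      exact hG.apply_eq_of_mem_branch φ hr (hX x hx) (mem_branchFinset.1 (hTB x hx ht))
        (hS t (mem_biUnion.2 ⟨x, mem_erase.2 ⟨hxx₀, hx⟩, ht⟩))
    intro x hx v hv
    obtain rfl | hxx₀ := eq_or_ne x x₀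
    · rw [hleaf x (hx₀X hx) v hv]
      exact hfixX x hx
    · exact hTfix x hx φ hr (hfixX x hx)
        (fun t ht => hS t (mem_biUnion.2 ⟨x, mem_erase.2 ⟨hxx₀, hx⟩, ht⟩)) v hv
  · rw [hG.card_insert_biUnion_branchFinset hX]
    refine mul_card_biUnion_erase_le ?_ (fun x hx hx1 => ?_) hTcost hx₀
    · exact hpend r L fun x hx =>
        neighborSet_eq_singleton_of_card_branchFinset_eq_one (hX x (mem_filter.1 hx).1)
          (mem_filter.1 hx).2
    · exact hx1 ▸ card_le_card (hTB x hx)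

lemma Connected.branchFinset_union_branchFinset [DecidableEq V] (hG : G.Connected) {a b : V}
    (hab : a ≠ b) : G.branchFinset a b ∪ G.branchFinset b a = univ := by
  ext v
  simpa using (hG v b).mem_branch_or_mem_branch hab

lemma Connected.univ_eq_insert_biUnion [DecidableEq V] [DecidableRel G.Adj] (hG : G.Connected)
    (a : V) : univ = insert a (({x | G.Adj a x} : Finset V).biUnion (G.branchFinset a)) := by
  ext v
  simp only [mem_univ, mem_insert, mem_biUnion, mem_filter, true_and, mem_branchFinset, true_iff]
  obtain rfl | hva := eq_or_ne v a
  · exact .inl rfl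
  · exact .inr ((hG v a).exists_adj_mem_branch hva)

lemma IsTree.branchFinset_eq_insert_biUnion [DecidableEq V] [DecidableRel G.Adj]
    (hT : G.IsTree) {p r : V} (hpr : G.Adj p r) :
    G.branchFinset p r =
      insert r (({x | G.Adj r x ∧ x ≠ p} : Finset V).biUnion (G.branchFinset r)) := by
  ext v
  simp only [mem_insert, mem_biUnion, mem_filter, mem_univ, true_and, mem_branchFinset]
  constructor
  · intro hv
    obtain rfl | hvr := eq_or_ne v r
    · exact .inl rfl
    obtain ⟨x, hx, hvx⟩ := (hT.connected v r).exists_adj_mem_branch hvr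
    refine .inr ⟨x, ⟨hx, ?_⟩, hvx⟩
    rintro rfl
    exact Set.disjoint_left.1 (hT.isAcyclic.disjoint_branch_branch hpr) hv hvx
  · rintro (rfl | ⟨x, ⟨hx, hxp⟩, hvx⟩)
    · exact mem_branch_self p v
    · refine hT.connected.branch_subset_branch hpr.ne (fun hp => hxp ?_) hvx
      exact (hT.isAcyclic.eq_of_adj_of_mem_branch hx hpr.symm hp).symm

lemma IsTree.card_branchFinset_add_card_branchFinset (hT : G.IsTree) {a b : V}
    (hab : G.Adj a b) : #(G.branchFinset a b) + #(G.branchFinset b a) = Fintype.card V := by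
  classical
  rw [← card_union_of_disjoint, hT.connected.branchFinset_union_branchFinset hab.ne, card_univ]
  rw [← disjoint_coe, coe_branchFinset, coe_branchFinset]
  exact hT.isAcyclic.disjoint_branch_branch hab

theorem IsTree.exists_branchFixingSet (hT : G.IsTree) (hD : 3 ≤ D) (hpend : G.PendantBounded D)
    {p r : V} (hpr : G.Adj p r) :
    ∃ S ⊆ G.branchFinset p r, G.IsBranchFixingSet p r S ∧
      (D + 1) * #S ≤ (D - 1) * #(G.branchFinset p r) := by
  classical
  induction hn : #(G.branchFinset p r) using Nat.strong_induction_on generalizing p r with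
  | _ n ih =>
    set X : Finset V := {x | G.Adj r x ∧ x ≠ p}
    have hX : ∀ x ∈ X, G.Adj r x ∧ x ≠ p := fun x hx => (mem_filter.1 hx).2
    have hB := hT.branchFinset_eq_insert_biUnion hpr
    have hchild : ∀ x ∈ X, ∃ S ⊆ G.branchFinset r x, G.IsBranchFixingSet r x S ∧
        (D + 1) * #S ≤ (D - 1) * #(G.branchFinset r x) := by
      intro x hx
      refine ih _ ?_ (hX x hx).1 rfl
      rw [← hn, hB]
      refine card_lt_card (ssubset_iff.2 ⟨r, fun hr => ?_, ?_⟩)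
      · exact notMem_branch_of_ne (hX x hx).1.ne' (mem_branchFinset.1 hr)
      · exact insert_subset_insert _ (subset_biUnion_of_mem _ hx)
    obtain ⟨S, hSX, hSfix, hScost⟩ :=
      hT.isAcyclic.exists_fixingSet_of_branchFixingSets hD hpend (fun x hx => (hX x hx).1) hchild
    refine ⟨S, hB ▸ hSX.trans (subset_insert _ _), fun φ hp hr hS v hv => ?_,
      by rwa [← hn, hB]⟩
    have hφX : Set.MapsTo φ X X := fun x hx => by
      refine mem_filter.2 ⟨mem_univ _, ?_, fun hxp => (hX x hx).2 (φ.injective (hxp.trans hp.symm))⟩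
      simpa [hr] using φ.map_adj_iff.2 (hX x hx).1
    rw [← mem_branchFinset, hB, mem_insert, mem_biUnion] at hv
    rcases hv with rfl | ⟨x, hx, hvx⟩
    · exact hr
    · exact hSfix φ hr hφX hS x hx v (mem_branchFinset.1 hvx)

noncomputable def maxBranchCard [DecidableEq V] (G : SimpleGraph V) (v : V) : ℕ :=
  (univ.erase v).sup fun x => #(G.branchFinset v x)

def IsCentroid (G : SimpleGraph V) (v : V) : Prop :=
  ∀ x ≠ v, 2 * #(G.branchFinset v x) ≤ Fintype.card V

lemma IsCentroid.map {v : V} (h : G.IsCentroid v) (φ : G ≃g G) : G.IsCentroid (φ v) := by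
  intro x hx
  obtain ⟨y, rfl⟩ := φ.surjective x
  rw [card_branchFinset_map]
  exact h y fun hyv => hx (hyv ▸ rfl)

theorem IsTree.exists_isCentroid [Nonempty V] (hT : G.IsTree) : ∃ v, G.IsCentroid v := by
  classical
  obtain ⟨v, -, hv⟩ := exists_min_image univ G.maxBranchCard univ_nonempty
  refine ⟨v, fun x hxv => ?_⟩
  by_contra! hbig
  obtain ⟨u, hvu, hxu⟩ := (hT.connected x v).exists_adj_mem_branch hxv
  have hBx : G.branchFinset v x = G.branchFinset v u := by
    ext w
    rw [mem_branchFinset, mem_branchFinset, branch_eq_of_mem hxu]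
  rw [hBx] at hbig
  have hsum := hT.card_branchFinset_add_card_branchFinset hvu
  have hu : u ∈ G.branchFinset v u := mem_branchFinset.2 (mem_branch_self v u)
  have hsmall : ∀ y ∈ univ.erase u, #(G.branchFinset u y) < #(G.branchFinset v u) := by
    intro y hy
    by_cases hvy : v ∈ G.branch u y
    · have hBy : G.branchFinset u y = G.branchFinset u v := by
        ext w
        rw [mem_branchFinset, mem_branchFinset, branch_eq_of_mem hvy]
      rw [hBy]
      omega
    · refine card_lt_card (ssubset_iff.2 ⟨u, ?_, insert_subset hu fun w hw => ?_⟩)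
      · exact fun hu' => notMem_branch_of_ne (ne_of_mem_erase hy) (mem_branchFinset.1 hu')
      · exact mem_branchFinset.2
          (hT.connected.branch_subset_branch hvu.ne hvy (mem_branchFinset.1 hw))
  have hlt : G.maxBranchCard u < G.maxBranchCard v := by
    unfold maxBranchCard
    exact ((Finset.sup_lt_iff (card_pos.2 ⟨u, hu⟩)).2 hsmall).trans_le
        (le_sup (f := fun x => #(G.branchFinset v x)) (mem_erase.2 ⟨hvu.ne', mem_univ u⟩))
  exact (hv u (mem_univ u)).not_gt hlt

theorem IsTree.adj_of_isCentroid (hT : G.IsTree) {a b : V} (ha : G.IsCentroid a)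
    (hb : G.IsCentroid b) (hab : a ≠ b) : G.Adj a b := by
  classical
  by_contra hnadj
  obtain ⟨u, hau, hbu⟩ := (hT.connected b a).exists_adj_mem_branch hab.symm
  have hub : u ≠ b := fun h => hnadj (h ▸ hau)
  have hu : u ∈ G.branchFinset a b ∩ G.branchFinset b a := by
    rw [mem_inter, mem_branchFinset, mem_branchFinset, branch_eq_of_mem hbu]
    exact ⟨mem_branch_self a u, mem_branch_of_adj hau hab hub⟩
  have hcard := card_union_add_card_inter (G.branchFinset a b) (G.branchFinset b a)
  rw [hT.connected.branchFinset_union_branchFinset hab, card_univ] at hcard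
  have := card_pos.2 ⟨u, hu⟩
  have := ha b hab.symm
  have := hb a hab
  omega

lemma IsTree.eq_or_eq_of_isCentroid (hT : G.IsTree) {a b m : V} (hab : G.Adj a b)
    (ha : G.IsCentroid a) (hb : G.IsCentroid b) (hm : G.IsCentroid m) : m = a ∨ m = b := by
  classical
  by_contra! h
  exact hT.isAcyclic.cliqueFree le_rfl {a, b, m} (is3Clique_triple_iff.2
    ⟨hab, hT.adj_of_isCentroid ha hm h.1.symm, hT.adj_of_isCentroid hb hm h.2.symm⟩)

lemma IsTree.sym2_apply_eq_of_isCentroid (hT : G.IsTree) {a b : V} (hab : G.Adj a b)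
    (ha : G.IsCentroid a) (hb : G.IsCentroid b) (φ : G ≃g G) : s(φ a, φ b) = s(a, b) := by
  have hφ : φ a ≠ φ b := φ.injective.ne hab.ne
  rcases hT.eq_or_eq_of_isCentroid hab ha hb (ha.map φ) with h₁ | h₁ <;>
    rcases hT.eq_or_eq_of_isCentroid hab ha hb (hb.map φ) with h₂ | h₂ <;>
    simp_all [Sym2.eq_swap]

theorem IsTree.exists_isFixingSet_of_forall_apply_eq (hT : G.IsTree) (hD : 3 ≤ D)
    (hpend : G.PendantBounded D) {a : V} (ha : ∀ φ : G ≃g G, φ a = a) :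
    ∃ S : Finset V, IsFixingSet G S ∧ (D + 1) * #S ≤ (D - 1) * Fintype.card V := by
  classical
  set X : Finset V := {x | G.Adj a x}
  have hX : ∀ x ∈ X, G.Adj a x := fun x hx => (mem_filter.1 hx).2
  obtain ⟨S, -, hSfix, hScost⟩ := hT.isAcyclic.exists_fixingSet_of_branchFixingSets hD hpend hX
    fun x hx => hT.exists_branchFixingSet hD hpend (hX x hx)
  have huniv := hT.connected.univ_eq_insert_biUnion a
  refine ⟨S, fun φ hS v => ?_, by rwa [← card_univ, huniv]⟩
  have hφX : Set.MapsTo φ X X := fun x hx =>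
    mem_filter.2 ⟨mem_univ _, by simpa [ha φ] using φ.map_adj_iff.2 (hX x hx)⟩
  have hv := huniv ▸ mem_univ v
  rw [mem_insert, mem_biUnion] at hv
  rcases hv with rfl | ⟨x, hx, hvx⟩
  · exact ha φ
  · exact hSfix φ (ha φ) hφX hS x hx v (mem_branchFinset.1 hvx)

theorem IsTree.exists_isFixingSet_of_sym2_apply_eq (hT : G.IsTree) (hD : 3 ≤ D)
    (hpend : G.PendantBounded D) {a b : V} (hab : G.Adj a b)
    (hφ : ∀ φ : G ≃g G, s(φ a, φ b) = s(a, b)) :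
    ∃ S : Finset V, IsFixingSet G S ∧ (D + 1) * #S ≤ (D - 1) * Fintype.card V := by
  classical
  obtain ⟨SA, -, hSAfix, hSAcost⟩ := hT.exists_branchFixingSet hD hpend hab.symm
  obtain ⟨SB, -, hSBfix, hSBcost⟩ := hT.exists_branchFixingSet hD hpend hab
  obtain ⟨S, hUS, -, ⟨s, hs⟩, hScard⟩ :=
    exists_nonempty_superset_card_le (subset_univ (SA ∪ SB)) (mem_univ a)
  refine ⟨S, fun φ hS => ?_, ?_⟩
  · have hfix : φ a = a ∧ φ b = b := by
      refine (Sym2.eq_iff.1 (hφ φ)).resolve_right fun ⟨hφa, hφb⟩ => ?_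
      rcases (hT.connected s b).mem_branch_or_mem_branch hab.ne with hsB | hsA
      · exact hT.isAcyclic.apply_ne_of_mem_branch hab φ hφa hφb hsB (hS s hs)
      · exact hT.isAcyclic.apply_ne_of_mem_branch hab.symm φ hφb hφa hsA (hS s hs)
    intro v
    rcases (hT.connected v b).mem_branch_or_mem_branch hab.ne with hvB | hvA
    · exact hSBfix φ hfix.1 hfix.2 (fun w hw => hS w (hUS (mem_union_right _ hw))) v hvB
    · exact hSAfix φ hfix.2 hfix.1 (fun w hw => hS w (hUS (mem_union_left _ hw))) v hvA
  · have hn : 2 ≤ Fintype.card V := Fintype.one_lt_card_iff.2 ⟨a, b, hab.ne⟩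
    calc (D + 1) * #S ≤ (D + 1) * max #(SA ∪ SB) 1 := Nat.mul_le_mul_left _ hScard
      _ = max ((D + 1) * #(SA ∪ SB)) ((D + 1) * 1) := mul_max _ _ _
      _ ≤ (D - 1) * Fintype.card V := max_le ?_ (by simpa using add_one_le_sub_one_mul hD hn)
    calc (D + 1) * #(SA ∪ SB) ≤ (D + 1) * #SA + (D + 1) * #SB := by
          rw [← mul_add]
          exact Nat.mul_le_mul_left _ (card_union_le _ _)
      _ ≤ (D - 1) * #(G.branchFinset b a) + (D - 1) * #(G.branchFinset a b) :=
          add_le_add hSAcost hSBcost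
      _ = (D - 1) * Fintype.card V := by
          rw [← mul_add, add_comm, hT.card_branchFinset_add_card_branchFinset hab]

theorem IsTree.exists_isFixingSet (hT : G.IsTree) (hD : 3 ≤ D) (hpend : G.PendantBounded D) :
    ∃ S : Finset V, IsFixingSet G S ∧ (D + 1) * #S ≤ (D - 1) * Fintype.card V := by
  have : Nonempty V := hT.connected.nonempty
  obtain ⟨a, ha⟩ := hT.exists_isCentroid
  by_cases h : ∃ b, G.IsCentroid b ∧ b ≠ a
  · obtain ⟨b, hb, hba⟩ := h
    have hab := hT.adj_of_isCentroid ha hb hba.symm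
    exact hT.exists_isFixingSet_of_sym2_apply_eq hD hpend hab
      (hT.sym2_apply_eq_of_isCentroid hab ha hb)
  · push Not at h
    exact hT.exists_isFixingSet_of_forall_apply_eq hD hpend fun φ => h _ (ha.map φ)

end Finite

end SimpleGraph

lemma distinguishable_distinguishingNumber {V : Type*} {G : SimpleGraph V}
    (h : distinguishingNumber G ≠ 0) : Distinguishable G (distinguishingNumber G) :=
  Nat.sInf_mem (Nat.nonempty_of_pos_sInf (Nat.pos_of_ne_zero h))

theorem tree_fixing_density_le_of_distinguishingNumber
    {V : Type*} [Fintype V] (G : SimpleGraph V)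
    (hT : G.IsTree) (D : ℕ) (hD3 : 3 ≤ D)
    (hD : distinguishingNumber G = D) :
    (fixingNumber G : ℚ) ≤ ((D : ℚ) - 1) / ((D : ℚ) + 1) * Fintype.card V := by
  obtain ⟨c, hc⟩ : Distinguishable G D := hD ▸ distinguishable_distinguishingNumber (by omega)
  obtain ⟨S, hS, hcard⟩ := hT.exists_isFixingSet hD3 (Fintype.card_fin D ▸ hc.pendantBounded)
  have hFS : fixingNumber G ≤ #S := Nat.sInf_le ⟨S, rfl, hS⟩
  have hF : (D + 1) * fixingNumber G ≤ (D - 1) * Fintype.card V :=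
    (Nat.mul_le_mul_left _ hFS).trans hcard
  rw [div_mul_eq_mul_div, le_div_iff₀ (by positivity)]
  have hF' : ((D + 1 : ℕ) * fixingNumber G : ℚ) ≤ ((D - 1 : ℕ) * Fintype.card V : ℚ) := by
    exact_mod_cast hF
  push_cast [Nat.cast_sub (by omega : 1 ≤ D)] at hF'
  linarith
end

section
/- For every D ≥ 2 and every k ≥ 1, the tree T_k obtained from a path on k vertices by attaching D new leaves to each vertex of the path has order k(D+1), distinguishing number D, and fixing number k(D-1); in particular F(T_k) = ((D-1)/(D+1))·|V(T_k)|. -/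
open SimpleGraph

/-- The tree obtained from a path on `k` vertices by attaching `D` new leaves
to each path vertex.  `Sum.inl i` are the path vertices and `Sum.inr (i, j)`
is the `j`-th leaf attached to `v_i`. -/
def broomPath (k D : ℕ) : SimpleGraph (Fin k ⊕ Fin k × Fin D) :=
  SimpleGraph.fromRel (fun a b =>
    match a, b with
    | Sum.inl i, Sum.inl j => (i : ℕ) + 1 = (j : ℕ)
    | Sum.inl i, Sum.inr p => p.1 = i
    | _, _ => False)

namespace BroomAux

variable {k D : ℕ}

lemma adj_ll (i j : Fin k) : (broomPath k D).Adj (.inl i) (.inl j) ↔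
    ((i : ℕ) + 1 = j ∨ (j : ℕ) + 1 = i) := by
  simp only [broomPath, fromRel_adj]
  constructor
  · rintro ⟨-, h⟩; exact h
  · rintro (h | h)
    · exact ⟨by intro e; injection e with e; omega, Or.inl h⟩
    · exact ⟨by intro e; injection e with e; omega, Or.inr h⟩

lemma adj_lr (i : Fin k) (p : Fin k × Fin D) :
    (broomPath k D).Adj (.inl i) (.inr p) ↔ p.1 = i := by
  simp [broomPath, fromRel_adj]

lemma adj_rl (i : Fin k) (p : Fin k × Fin D) :
    (broomPath k D).Adj (.inr p) (.inl i) ↔ p.1 = i := by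
  simp [broomPath, fromRel_adj]

lemma adj_rr (p q : Fin k × Fin D) :
    ¬ (broomPath k D).Adj (.inr p) (.inr q) := by
  simp [broomPath, fromRel_adj]

lemma adj_leaf {x : Fin k ⊕ Fin k × Fin D} {p : Fin k × Fin D}
    (h : (broomPath k D).Adj x (.inr p)) : x = .inl p.1 := by
  cases x with
  | inl i => rw [adj_lr] at h; rw [h]
  | inr q => exact absurd h (adj_rr q p)

def swapAux (i : Fin k) (j₁ j₂ : Fin D) :
    (Fin k ⊕ Fin k × Fin D) ≃ (Fin k ⊕ Fin k × Fin D) :=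
  Equiv.swap (.inr (i, j₁)) (.inr (i, j₂))

lemma swap_adj (i : Fin k) (j₁ j₂ : Fin D) {a b} (h : (broomPath k D).Adj a b) :
    (broomPath k D).Adj (swapAux i j₁ j₂ a) (swapAux i j₁ j₂ b) := by
  have key : ∀ x : Fin k ⊕ Fin k × Fin D, swapAux i j₁ j₂ x = x ∨
      ((∃ j, x = Sum.inr (i, j)) ∧ ∃ j, swapAux i j₁ j₂ x = Sum.inr (i, j)) := by
    intro x
    by_cases h1 : x = .inr (i, j₁)
    · subst h1; right
      exact ⟨⟨j₁, rfl⟩, j₂, by simp [swapAux]⟩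
    by_cases h2 : x = .inr (i, j₂)
    · subst h2; right
      exact ⟨⟨j₂, rfl⟩, j₁, by simp [swapAux, Equiv.swap_apply_right]⟩
    · left; exact Equiv.swap_apply_of_ne_of_ne h1 h2
  rcases key a with ha | ⟨⟨ja, ha⟩, ⟨ja', ha'⟩⟩ <;>
    rcases key b with hb | ⟨⟨jb, hb⟩, ⟨jb', hb'⟩⟩
  · rw [ha, hb]; exact h
  · rw [ha, hb']
    subst hb
    have := adj_leaf h
    subst this
    exact (adj_lr _ _).2 rfl
  · rw [ha', hb]
    subst ha
    have := adj_leaf h.symm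
    subst this
    exact (adj_rl _ _).2 rfl
  · subst ha; subst hb
    exact absurd h (adj_rr _ _)

def swapIso (i : Fin k) (j₁ j₂ : Fin D) : broomPath k D ≃g broomPath k D where
  toEquiv := swapAux i j₁ j₂
  map_rel_iff' := by
    intro a b
    constructor
    · intro h
      have := swap_adj i j₁ j₂ h
      simpa [swapAux, Equiv.swap_apply_self] using this
    · exact swap_adj i j₁ j₂

lemma swapIso_coe (i : Fin k) (j₁ j₂ : Fin D) (v) :
    (swapIso i j₁ j₂) v = Equiv.swap (Sum.inr (i, j₁)) (Sum.inr (i, j₂)) v := rfl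

lemma swap_fix (i : Fin k) (j₁ j₂ : Fin D) {v} (h1 : v ≠ .inr (i, j₁))
    (h2 : v ≠ .inr (i, j₂)) : (swapIso i j₁ j₂) v = v := by
  rw [swapIso_coe]; exact Equiv.swap_apply_of_ne_of_ne h1 h2

lemma swap_left (i : Fin k) (j₁ j₂ : Fin D) :
    (swapIso i j₁ j₂) (.inr (i, j₁)) = .inr (i, j₂) := by
  rw [swapIso_coe]; exact Equiv.swap_apply_left _ _

lemma swap_right (i : Fin k) (j₁ j₂ : Fin D) :
    (swapIso i j₁ j₂) (.inr (i, j₂)) = .inr (i, j₁) := by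
  rw [swapIso_coe]; exact Equiv.swap_apply_right _ _

lemma swap_pres {α : Type*} (i : Fin k) (j₁ j₂ : Fin D)
    (c : (Fin k ⊕ Fin k × Fin D) → α)
    (hcc : c (.inr (i, j₁)) = c (.inr (i, j₂))) :
    ∀ v, c ((swapIso i j₁ j₂) v) = c v := by
  intro v
  by_cases h1 : v = .inr (i, j₁)
  · rw [h1, swap_left, ← hcc]
  by_cases h2 : v = .inr (i, j₂)
  · rw [h2, swap_right, hcc]
  · rw [swap_fix i j₁ j₂ h1 h2]

/-- an isomorphism maps leaves to leaves -/
lemma iso_inr (hD : 2 ≤ D) (φ : broomPath k D ≃g broomPath k D) (p : Fin k × Fin D) :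
    ∃ q, φ (.inr p) = .inr q := by
  cases hφ : φ (.inr p) with
  | inr q => exact ⟨q, rfl⟩
  | inl i =>
    exfalso
    have key : ∀ j : Fin D, φ.symm (.inr (i, j)) = .inl p.1 := by
      intro j
      have h0 : (broomPath k D).Adj (φ (.inr p)) (φ (φ.symm (.inr (i, j)))) := by
        rw [hφ, RelIso.apply_symm_apply]
        exact (adj_lr _ _).2 rfl
      have h1 := φ.map_rel_iff.mp h0
      exact adj_leaf h1.symm
    have h01 := key ⟨0, by omega⟩
    have h11 := key ⟨1, by omega⟩
    have := φ.symm.toEquiv.injective (h01.trans h11.symm)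
    simp at this

/-- an isomorphism maps path vertices to path vertices -/
lemma iso_inl (hD : 2 ≤ D) (φ : broomPath k D ≃g broomPath k D) (i : Fin k) :
    ∃ t, φ (.inl i) = .inl t := by
  cases hφ : φ (.inl i) with
  | inl t => exact ⟨t, rfl⟩
  | inr q =>
    obtain ⟨q', hq'⟩ := iso_inr hD φ.symm q
    have : φ.symm (φ (.inl i)) = .inl i := φ.symm_apply_apply _
    rw [hφ, hq'] at this
    exact absurd this (by simp)

/-- an automorphism fixing path vertex 0 fixes all path vertices -/
lemma path_rigid (hD : 2 ≤ D) (φ : broomPath k D ≃g broomPath k D)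
    (hk : 0 < k) (h0 : φ (.inl ⟨0, hk⟩) = .inl ⟨0, hk⟩) :
    ∀ i : Fin k, φ (.inl i) = .inl i := by
  have main : ∀ n : ℕ, ∀ hn : n < k, φ (.inl ⟨n, hn⟩) = .inl ⟨n, hn⟩ := by
    intro n
    induction n using Nat.strong_induction_on with
    | _ n IH =>
      intro hn
      match n with
      | 0 => exact h0
      | Nat.succ m =>
        have hm : m < k := by omega
        have IHm := IH m (by omega) hm
        obtain ⟨t, ht⟩ := iso_inl hD φ ⟨m + 1, hn⟩
        have hadj : (broomPath k D).Adj (.inl ⟨m, hm⟩) (.inl ⟨m + 1, hn⟩) :=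
          (adj_ll _ _).2 (Or.inl rfl)
        have h2 : (broomPath k D).Adj (φ (.inl ⟨m, hm⟩)) (φ (.inl ⟨m + 1, hn⟩)) :=
          φ.map_rel_iff.mpr hadj
        rw [IHm, ht] at h2
        rw [adj_ll] at h2
        simp only [Fin.val_mk] at h2
        rcases h2 with h2 | h2
        · have : t = ⟨m + 1, hn⟩ := Fin.ext (by simp only [Fin.val_mk]; omega)
          rw [ht, this]
        · have hm1 : (t : ℕ) < k := t.2
          have htm : t = ⟨m - 1, by omega⟩ := Fin.ext (by simp only [Fin.val_mk]; omega)
          have IHm1 := IH (m - 1) (by omega) (by omega)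
          rw [htm] at ht
          have := φ.toEquiv.injective (ht.trans IHm1.symm)
          simp only [Sum.inl.injEq, Fin.mk.injEq] at this
          omega
  intro i
  have : i = ⟨(i : ℕ), i.2⟩ := Fin.ext rfl
  rw [this]; exact main _ _

def myColor (hD : 2 ≤ D) : (Fin k ⊕ Fin k × Fin D) → Fin D
  | .inl i => if (i : ℕ) = 0 then ⟨0, by omega⟩ else ⟨1, by omega⟩
  | .inr p => p.2

lemma myColor_distinguishing (hk : 0 < k) (hD : 2 ≤ D) :
    IsDistinguishingColoring (broomPath k D) (myColor hD) := by
  intro φ hc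
  have h0 : φ (.inl ⟨0, hk⟩) = .inl ⟨0, hk⟩ := by
    obtain ⟨t, ht⟩ := iso_inl hD φ ⟨0, hk⟩
    have hcc := hc (.inl ⟨0, hk⟩)
    rw [ht] at hcc
    have htv : (t : ℕ) = 0 := by
      by_contra hne
      simp only [myColor, hne, if_false, Fin.val_mk, if_true, if_pos rfl] at hcc
      rw [Fin.mk.injEq] at hcc
      omega
    rw [ht]
    congr 1
    exact Fin.ext htv
  have hinl := path_rigid hD φ hk h0
  have hinr : ∀ p : Fin k × Fin D, φ (.inr p) = .inr p := by
    intro p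
    obtain ⟨q, hq⟩ := iso_inr hD φ p
    have hadj : (broomPath k D).Adj (.inr p) (.inl p.1) := (adj_rl _ _).2 rfl
    have h2 := φ.map_rel_iff.mpr hadj
    rw [hq, hinl p.1, adj_rl] at h2
    have hcc := hc (.inr p)
    rw [hq] at hcc
    simp only [myColor] at hcc
    rw [hq]
    congr 1
    exact Prod.ext h2 hcc
  intro v
  cases v with
  | inl i => exact hinl i
  | inr p => exact hinr p

lemma dist_lower (hk : 0 < k) (hD : 2 ≤ D) {n : ℕ}
    {c : (Fin k ⊕ Fin k × Fin D) → Fin n}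
    (hc : IsDistinguishingColoring (broomPath k D) c) :
    D ≤ n := by
  by_contra hlt
  push_neg at hlt
  obtain ⟨j₁, j₂, hne, heq⟩ := Fintype.exists_ne_map_eq_of_card_lt
    (fun j : Fin D => c (.inr (⟨0, hk⟩, j))) (by simpa using hlt)
  have := hc (swapIso ⟨0, hk⟩ j₁ j₂) (swap_pres _ _ _ c heq) (.inr (⟨0, hk⟩, j₁))
  rw [swap_left] at this
  apply hne
  injection this with h
  exact (congrArg Prod.snd h).symm

def fixSet (k D : ℕ) : Finset (Fin k ⊕ Fin k × Fin D) :=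
  Finset.image (fun p : Fin k × Fin (D - 1) =>
    Sum.inr (p.1, Fin.castLE (Nat.sub_le D 1) p.2)) Finset.univ

lemma fixSet_card : (fixSet k D).card = k * (D - 1) := by
  rw [fixSet, Finset.card_image_of_injective _ (by
    intro a b hab
    injection hab with h
    obtain ⟨h1, h2⟩ := Prod.mk.injEq .. ▸ h
    exact Prod.ext h1 (Fin.castLE_injective _ h2))]
  simp

lemma mem_fixSet {i : Fin k} {j : Fin D} (hj : (j : ℕ) < D - 1) :
    (Sum.inr (i, j) : Fin k ⊕ Fin k × Fin D) ∈ fixSet k D := by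
  rw [fixSet, Finset.mem_image]
  exact ⟨(i, ⟨j, hj⟩), Finset.mem_univ _, by simp [Fin.castLE]⟩

lemma fixSet_fixing (hD : 2 ≤ D) : IsFixingSet (broomPath k D) ↑(fixSet k D) := by
  intro φ hfix
  have hfix' : ∀ (i : Fin k) (j : Fin D), (j : ℕ) < D - 1 →
      φ (.inr (i, j)) = .inr (i, j) :=
    fun i j hj => hfix _ (mem_fixSet hj)
  have hinl : ∀ i : Fin k, φ (.inl i) = .inl i := by
    intro i
    have h0 := hfix' i ⟨0, by omega⟩ (by simp; omega)
    have hadj : (broomPath k D).Adj (.inl i) (.inr (i, ⟨0, by omega⟩)) :=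
      (adj_lr _ _).2 rfl
    have h2 := φ.map_rel_iff.mpr hadj
    rw [h0] at h2
    exact adj_leaf h2
  have hinr : ∀ (i : Fin k) (j : Fin D), φ (.inr (i, j)) = .inr (i, j) := by
    intro i j
    by_cases hj : (j : ℕ) < D - 1
    · exact hfix' i j hj
    have hadj : (broomPath k D).Adj (.inl i) (.inr (i, j)) := (adj_lr _ _).2 rfl
    have h2 := φ.map_rel_iff.mpr hadj
    rw [hinl i] at h2
    cases hx : φ (.inr (i, j)) with
    | inl t =>
      rw [hx] at h2
      have := φ.toEquiv.injective (hx.trans (hinl t).symm)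
      exact absurd this (by simp)
    | inr q =>
      rw [hx, adj_lr] at h2
      by_cases hq : (q.2 : ℕ) < D - 1
      · have := φ.toEquiv.injective (hx.trans (h2 ▸ (hfix' i q.2 hq)).symm)
        exfalso
        injection this with h
        have : j = q.2 := (Prod.mk.injEq .. ▸ h).2
        omega
      · have hq2 : q.2 = j := Fin.ext (by have := q.2.2; have := j.2; omega)
        exact congrArg Sum.inr (Prod.ext h2 hq2)
  intro v
  cases v with
  | inl i => exact hinl i
  | inr p => exact hinr p.1 p.2

lemma fix_lower (hD : 2 ≤ D) (S : Finset (Fin k ⊕ Fin k × Fin D))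
    (hfix : IsFixingSet (broomPath k D) ↑S) : k * (D - 1) ≤ S.card := by
  classical
  set A : Fin k → Finset (Fin D) :=
    fun i => Finset.univ.filter (fun j => Sum.inr (i, j) ∈ S) with hA
  have hAcard : ∀ i, D - 1 ≤ (A i).card := by
    intro i
    by_contra hlt
    push_neg at hlt
    have hcompl : 1 < (Finset.univ \ A i).card := by
      rw [Finset.card_sdiff_of_subset (Finset.subset_univ _)]
      have := Finset.card_le_univ (A i)
      simp only [Finset.card_univ, Fintype.card_fin] at this ⊢
      omega
    obtain ⟨j₁, hj₁, j₂, hj₂, hne⟩ := Finset.one_lt_card.mp hcompl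
    simp only [hA, Finset.mem_sdiff, Finset.mem_univ, true_and,
      Finset.mem_filter, not_and] at hj₁ hj₂
    have hfixS : ∀ v ∈ ↑S, (swapIso i j₁ j₂) v = v := by
      intro v hv
      refine swap_fix i j₁ j₂ ?_ ?_
      · rintro rfl; exact hj₁ hv
      · rintro rfl; exact hj₂ hv
    have := hfix (swapIso i j₁ j₂) hfixS (.inr (i, j₁))
    rw [swap_left] at this
    injection this with h
    exact hne (congrArg Prod.snd h).symm
  have hinj : ∀ i : Fin k, Function.Injective
      (fun j : Fin D => (Sum.inr (i, j) : Fin k ⊕ Fin k × Fin D)) := by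
    intro i a b hab
    injection hab with h
    exact congrArg Prod.snd h
  have hdisj : ∀ i ∈ Finset.univ, ∀ j ∈ Finset.univ, i ≠ j →
      Disjoint ((A i).image (fun x => (Sum.inr (i, x) : Fin k ⊕ Fin k × Fin D)))
        ((A j).image (fun x => (Sum.inr (j, x) : Fin k ⊕ Fin k × Fin D))) := by
    intro i _ j _ hij
    rw [Finset.disjoint_left]
    intro a hai haj
    simp only [Finset.mem_image] at hai haj
    obtain ⟨x, -, rfl⟩ := hai
    obtain ⟨y, -, he⟩ := haj
    injection he with h
    exact hij (congrArg Prod.fst h).symm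
  calc k * (D - 1) = ∑ _i : Fin k, (D - 1) := by
        simp [Finset.sum_const, mul_comm]
    _ ≤ ∑ i : Fin k, (A i).card := Finset.sum_le_sum (fun i _ => hAcard i)
    _ = ∑ i : Fin k, ((A i).image
        (fun j => (Sum.inr (i, j) : Fin k ⊕ Fin k × Fin D))).card := by
        refine Finset.sum_congr rfl (fun i _ => ?_)
        rw [Finset.card_image_of_injective _ (hinj i)]
    _ = (Finset.univ.biUnion (fun i : Fin k => (A i).image
        (fun j => (Sum.inr (i, j) : Fin k ⊕ Fin k × Fin D)))).card :=
        (Finset.card_biUnion hdisj).symm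
    _ ≤ S.card := by
        refine Finset.card_le_card ?_
        intro x hx
        simp only [Finset.mem_biUnion, Finset.mem_image] at hx
        obtain ⟨i, -, j, hj, rfl⟩ := hx
        exact (Finset.mem_filter.mp hj).2

end BroomAux

theorem broomPath_properties (k D : ℕ) (hk : 1 ≤ k) (hD : 2 ≤ D) :
    Fintype.card (Fin k ⊕ Fin k × Fin D) = k * (D + 1) ∧
    distinguishingNumber (broomPath k D) = D ∧
    fixingNumber (broomPath k D) = k * (D - 1) ∧
    (fixingNumber (broomPath k D) : ℚ) =
      ((D : ℚ) - 1) / ((D : ℚ) + 1) * Fintype.card (Fin k ⊕ Fin k × Fin D) := by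
  have hk0 : 0 < k := hk
  have hcard : Fintype.card (Fin k ⊕ Fin k × Fin D) = k * (D + 1) := by
    simp [Fintype.card_sum, Fintype.card_prod]
    ring
  have hdist : distinguishingNumber (broomPath k D) = D := by
    have hmem : D ∈ {n | Distinguishable (broomPath k D) n} :=
      ⟨BroomAux.myColor hD, BroomAux.myColor_distinguishing hk0 hD⟩
    have hne : {n | Distinguishable (broomPath k D) n}.Nonempty := ⟨D, hmem⟩
    obtain ⟨c, hc⟩ := Nat.sInf_mem hne
    exact le_antisymm (Nat.sInf_le hmem) (BroomAux.dist_lower hk0 hD hc)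
  have hfixn : fixingNumber (broomPath k D) = k * (D - 1) := by
    have hmem : k * (D - 1) ∈ {n | ∃ S : Finset (Fin k ⊕ Fin k × Fin D),
        S.card = n ∧ IsFixingSet (broomPath k D) ↑S} :=
      ⟨BroomAux.fixSet k D, BroomAux.fixSet_card, BroomAux.fixSet_fixing hD⟩
    have hne : {n | ∃ S : Finset (Fin k ⊕ Fin k × Fin D),
        S.card = n ∧ IsFixingSet (broomPath k D) ↑S}.Nonempty := ⟨_, hmem⟩
    obtain ⟨S, hScard, hSfix⟩ := Nat.sInf_mem hne
    exact le_antisymm (Nat.sInf_le hmem)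
      (le_trans (BroomAux.fix_lower hD S hSfix) (le_of_eq hScard))
  refine ⟨hcard, hdist, hfixn, ?_⟩
  rw [hfixn, hcard]
  have h1 : (1 : ℕ) ≤ D := by omega
  have hD1 : (D : ℚ) + 1 ≠ 0 := by positivity
  push_cast [Nat.cast_sub h1]
  field_simp
end

section
/- Let T be a tree and let T' be the smallest subtree of T containing all vertices of maximum eccentricity d. Then every vertex x of T' has the same eccentricity in T' as it has in T. -/
/-!
In a tree every interval `[c, e]` (the vertices on the `c`–`e` path) is covered by `[a, c]` and
`[a, e]`, for any vertex `a`. Consequently the union `T'` of the intervals between peripheral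
vertices is geodesically convex, so distances measured inside `T'` agree with those in `T`.
For `x ∈ T'` and any vertex `y`, the same covering property puts `x` between `y` and a
peripheral vertex `p`; a vertex farthest from `p` is again peripheral, lies in `T'`, and is at
least as far from `x` as `y` is. Hence the eccentricity of `x` is attained inside `T'`.
-/

open SimpleGraph

namespace SimpleGraph

variable {V : Type*} {G : SimpleGraph V}

def IsBetween (G : SimpleGraph V) (u v w : V) : Prop :=
  G.dist u v + G.dist v w = G.dist u w

def IsGeodesicallyConvex (G : SimpleGraph V) (S : Set V) : Prop :=
  ∀ ⦃u w v : V⦄, u ∈ S → w ∈ S → G.IsBetween u v w → v ∈ S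

def intervalUnion (G : SimpleGraph V) (P : Set V) : Set V :=
  {v | ∃ u w, u ∈ P ∧ w ∈ P ∧ G.IsBetween u v w}

def periphery (G : SimpleGraph V) : Set V :=
  {u | ecc G u = sSup (Set.range (ecc G))}

lemma IsBetween.symm {u v w : V} (h : G.IsBetween u v w) : G.IsBetween w v u := by
  unfold IsBetween at *
  rw [dist_comm (u := w) (v := v), dist_comm (u := v) (v := u), dist_comm (u := w) (v := u)]
  omega

lemma isBetween_self_left (u w : V) : G.IsBetween u u w := by
  simp [IsBetween]

lemma self_subset_intervalUnion (P : Set V) : P ⊆ G.intervalUnion P :=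
  fun u hu => ⟨u, u, hu, hu, isBetween_self_left u u⟩

lemma Connected.isBetween_of_right (hG : G.Connected) {p q r s : V}
    (hq : G.IsBetween p q r) (hs : G.IsBetween q s r) : G.IsBetween p s r := by
  have t1 := hG.dist_triangle (u := p) (v := q) (w := s)
  have t2 := hG.dist_triangle (u := p) (v := s) (w := r)
  unfold IsBetween at *
  omega

lemma Walk.isBetween_of_mem_support {u v m : V} {p : G.Walk u v}
    (hp : p.length = G.dist u v) (hm : m ∈ p.support) : G.IsBetween u m v := by
  classical
  have hlen : (p.takeUntil m hm).length + (p.dropUntil m hm).length = p.length := by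
    rw [← Walk.length_append, p.take_spec hm]
  have h1 := dist_le (p.takeUntil m hm)
  have h2 := dist_le (p.dropUntil m hm)
  have h3 := Reachable.dist_triangle_left ⟨p.takeUntil m hm⟩ v
  unfold IsBetween
  omega

lemma IsTree.mem_support_of_isBetween (hG : G.IsTree) {u v m : V}
    (h : G.IsBetween u m v) (p : G.Walk u v) : m ∈ p.support := by
  classical
  obtain ⟨q₁, hq₁⟩ := hG.connected.exists_walk_length_eq_dist u m
  obtain ⟨q₂, hq₂⟩ := hG.connected.exists_walk_length_eq_dist m v
  have hq : (q₁.append q₂).IsPath := by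
    apply Walk.isPath_of_length_eq_dist
    rw [Walk.length_append, hq₁, hq₂, h]
  have hpq : p.bypass = q₁.append q₂ :=
    congrArg Subtype.val ((hG.isAcyclic.subsingleton_path u v).elim ⟨_, p.bypass_isPath⟩ ⟨_, hq⟩)
  apply p.support_bypass_subset_support
  rw [hpq, Walk.mem_support_append_iff]
  exact Or.inl q₁.end_mem_support

/-- The unique `c`–`e` path lies inside the walk `c ⟶ a ⟶ e`. -/
lemma IsTree.isBetween_or_isBetween (hG : G.IsTree) {c y e : V} (h : G.IsBetween c y e)
    (a : V) : G.IsBetween a y c ∨ G.IsBetween a y e := by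
  obtain ⟨q₁, hq₁⟩ := hG.connected.exists_walk_length_eq_dist c a
  obtain ⟨q₂, hq₂⟩ := hG.connected.exists_walk_length_eq_dist a e
  have hy := hG.mem_support_of_isBetween h (q₁.append q₂)
  rcases (Walk.mem_support_append_iff _ _).mp hy with hy | hy
  · exact Or.inl (Walk.isBetween_of_mem_support hq₁ hy).symm
  · exact Or.inr (Walk.isBetween_of_mem_support hq₂ hy)

lemma IsTree.exists_isBetween_of_mem_intervalUnion (hG : G.IsTree) {P : Set V} {a b v : V}
    (ha : a ∈ G.intervalUnion P) (hv : G.IsBetween a v b) :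
    ∃ p ∈ P, G.IsBetween p v b := by
  obtain ⟨p, q, hp, hq, hapq⟩ := ha
  rcases hG.isBetween_or_isBetween hapq b with h | h
  · exact ⟨p, hp, hG.connected.isBetween_of_right h.symm hv⟩
  · exact ⟨q, hq, hG.connected.isBetween_of_right h.symm hv⟩

lemma IsTree.isGeodesicallyConvex_intervalUnion (hG : G.IsTree) (P : Set V) :
    G.IsGeodesicallyConvex (G.intervalUnion P) := by
  intro a b v ha hb hv
  obtain ⟨p, hp, hpvb⟩ := hG.exists_isBetween_of_mem_intervalUnion ha hv
  obtain ⟨q, hq, hqvp⟩ := hG.exists_isBetween_of_mem_intervalUnion hb hpvb.symm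
  exact ⟨q, p, hq, hp, hqvp⟩

lemma Connected.dist_le_of_isBetween (hG : G.Connected) {p r x y : V}
    (hr : ∀ z, G.dist p z ≤ G.dist p r) (hx : G.IsBetween y x p) :
    G.dist x y ≤ G.dist x r := by
  have t := hG.dist_triangle (u := p) (v := x) (w := r)
  have := hr y
  unfold IsBetween at hx
  rw [dist_comm (u := y), dist_comm (u := y) (v := p), dist_comm (u := x) (v := p)] at hx
  omega

lemma IsGeodesicallyConvex.dist_induce {S : Set V} (hS : G.IsGeodesicallyConvex S) (a b : S) :
    (G.induce S).dist a b = G.dist a b := by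
  by_cases hab : G.Reachable a b
  · obtain ⟨p, hp⟩ := hab.exists_walk_length_eq_dist
    have hsupp : ∀ v ∈ p.support, v ∈ S :=
      fun v hv => hS a.2 b.2 (Walk.isBetween_of_mem_support hp hv)
    let q := p.induce S hsupp
    have hq : q.length = p.length := by
      have h := congrArg Walk.length (p.map_induce hsupp)
      rwa [Walk.length_map] at h
    obtain ⟨r, hr⟩ := Reachable.exists_walk_length_eq_dist ⟨q⟩
    refine le_antisymm (hp ▸ hq ▸ dist_le q) ?_
    rw [← hr, ← Walk.length_map (Embedding.induce S).toHom]
    exact dist_le _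
  · have hab' : ¬(G.induce S).Reachable a b := fun h => hab (h.map (Embedding.induce S).toHom)
    rw [dist_eq_zero_of_not_reachable hab, dist_eq_zero_of_not_reachable hab']

section Eccentricity

variable [Finite V]

lemma dist_le_ecc (u v : V) : G.dist u v ≤ ecc G u :=
  le_csSup (Set.finite_range _).bddAbove ⟨v, rfl⟩

lemma exists_dist_eq_ecc (u : V) : ∃ v, G.dist u v = ecc G u :=
  have : Nonempty V := ⟨u⟩
  Nat.sSup_mem (Set.range_nonempty _) (Set.finite_range _).bddAbove

lemma ecc_le_sSup_range_ecc (u : V) : ecc G u ≤ sSup (Set.range (ecc G)) :=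
  le_csSup (Set.finite_range _).bddAbove ⟨u, rfl⟩

lemma mem_periphery_of_dist_eq_ecc {p r : V} (hp : p ∈ G.periphery)
    (hr : G.dist p r = ecc G p) : r ∈ G.periphery := by
  refine le_antisymm (ecc_le_sSup_range_ecc r) ?_
  rw [← hp, ← hr, dist_comm]
  exact dist_le_ecc r p

/-- If `x` lies between `y` and a peripheral `p`, a vertex `r` farthest from `p` is peripheral
and `d(x, y) ≤ d(p, r) - d(p, x) ≤ d(x, r)`. -/
lemma IsTree.exists_mem_periphery_dist_le (hG : G.IsTree) {x : V}
    (hx : x ∈ G.intervalUnion G.periphery) (y : V) :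
    ∃ r ∈ G.periphery, G.dist x y ≤ G.dist x r := by
  obtain ⟨p₁, p₂, hp₁, hp₂, hx⟩ := hx
  obtain ⟨p, hp, hyxp⟩ : ∃ p ∈ G.periphery, G.IsBetween y x p := by
    rcases hG.isBetween_or_isBetween hx y with h | h
    exacts [⟨p₁, hp₁, h⟩, ⟨p₂, hp₂, h⟩]
  obtain ⟨r, hr⟩ := exists_dist_eq_ecc (G := G) p
  exact ⟨r, mem_periphery_of_dist_eq_ecc hp hr,
    hG.connected.dist_le_of_isBetween (fun z => hr ▸ dist_le_ecc p z) hyxp⟩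

lemma IsGeodesicallyConvex.ecc_induce {S : Set V} (hS : G.IsGeodesicallyConvex S) (x : S)
    (hfar : ∀ y, ∃ s ∈ S, G.dist x y ≤ G.dist x s) : ecc (G.induce S) x = ecc G x := by
  refine le_antisymm (csSup_le' ?_) (csSup_le' ?_)
  · rintro _ ⟨s, rfl⟩
    rw [hS.dist_induce]
    exact dist_le_ecc _ _
  · rintro _ ⟨y, rfl⟩
    obtain ⟨s, hs, hys⟩ := hfar y
    refine hys.trans ?_
    rw [← hS.dist_induce x ⟨s, hs⟩]
    exact dist_le_ecc x _

end Eccentricity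

end SimpleGraph

theorem steiner_tree_eccentricity
    {V : Type*} [Fintype V] (G : SimpleGraph V) (hT : G.IsTree) :
    ∀ x : {v : V | ∃ u w : V, ecc G u = sSup (Set.range (ecc G)) ∧
        ecc G w = sSup (Set.range (ecc G)) ∧
        G.dist u v + G.dist v w = G.dist u w},
      sSup (Set.range ((G.induce {v : V | ∃ u w : V,
          ecc G u = sSup (Set.range (ecc G)) ∧
          ecc G w = sSup (Set.range (ecc G)) ∧
          G.dist u v + G.dist v w = G.dist u w}).dist x)) = ecc G ↑x := by
  intro x
  refine (hT.isGeodesicallyConvex_intervalUnion _).ecc_induce x fun y => ?_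
  obtain ⟨r, hr, hxy⟩ := hT.exists_mem_periphery_dist_le x.2 y
  exact ⟨r, self_subset_intervalUnion _ hr, hxy⟩
end
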